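/- arXiv:2509.08906 — 5 statements merged into one kernel-verified Lean document; each statement's English description precedes it below -/
import Mathlib

section
/- Let (X_n) be a sequence of Banach spaces and X their ℓ1-direct sum. If every closed infinite-dimensional subspace of each X_n contains an isomorphic copy of ℓ1, then every closed infinite-dimensional subspace of X contains an isomorphic copy of ℓ1. -/
open Filter Topology
set_option linter.unusedSectionVars false
set_option maxHeartbeats 1000000

noncomputable section

namespace L1Sat

local notation "ℓ¹" => lp (fun _ : ℕ => ℝ) 1

variable {X : ℕ → Type*} [∀ n, NormedAddCommGroup (X n)] [∀ n, NormedSpace ℝ (X n)]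
  [∀ n, CompleteSpace (X n)]

lemma hasSum_norm1 (x : lp X 1) : HasSum (fun n => ‖x n‖) ‖x‖ := by
  simpa using lp.hasSum_norm (p := 1) (by norm_num) x

lemma norm1 (x : lp X 1) : ‖x‖ = ∑' n, ‖x n‖ := (hasSum_norm1 x).tsum_eq.symm

lemma summable_norm1 (x : lp X 1) : Summable (fun n => ‖x n‖) := (hasSum_norm1 x).summable

example : CompleteSpace (lp X 1) := by infer_instance

lemma scalar_summable (a : ℓ¹) : Summable (fun k => |a k|) := by
  simpa [Real.norm_eq_abs] using summable_norm1 (X := fun _ => ℝ) a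

lemma scalar_norm (a : ℓ¹) : ‖a‖ = ∑' k, |a k| := by
  simpa [Real.norm_eq_abs] using norm1 (X := fun _ => ℝ) a

lemma coord_le_norm (x : lp X 1) (n : ℕ) : ‖x n‖ ≤ ‖x‖ :=
  lp.norm_apply_le_norm (by norm_num) x n

lemma smul_summable (z : ℕ → lp X 1) (hz1 : ∀ k, ‖z k‖ ≤ 1) (a : ℓ¹) :
    Summable (fun k => a k • z k) := by
  apply Summable.of_norm
  refine (scalar_summable a).of_nonneg_of_le (fun k => norm_nonneg _) (fun k => ?_)
  rw [norm_smul, Real.norm_eq_abs]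
  nlinarith [abs_nonneg (a k), hz1 k, norm_nonneg (z k)]

/-- The operator `a ↦ ∑ₖ aₖ • zₖ`. -/
def sumOp (z : ℕ → lp X 1) (hz1 : ∀ k, ‖z k‖ ≤ 1) : ℓ¹ →L[ℝ] lp X 1 :=
  LinearMap.mkContinuous
    { toFun := fun a => ∑' k, a k • z k
      map_add' := fun a b => by
        rw [← Summable.tsum_add (smul_summable z hz1 a) (smul_summable z hz1 b)]
        refine tsum_congr (fun k => ?_)
        rw [lp.coeFn_add]
        simp [add_smul]
      map_smul' := fun r a => by
        simp only [RingHom.id_apply]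
        rw [← tsum_const_smul'' r]
        refine tsum_congr (fun k => ?_)
        rw [lp.coeFn_smul]
        simp [smul_smul] }
    1
    (fun a => by
      rw [one_mul]
      calc ‖∑' k, a k • z k‖ ≤ ∑' k, ‖a k • z k‖ := by
            apply norm_tsum_le_tsum_norm
            refine (scalar_summable a).of_nonneg_of_le (fun k => norm_nonneg _) (fun k => ?_)
            rw [norm_smul, Real.norm_eq_abs]
            nlinarith [abs_nonneg (a k), hz1 k, norm_nonneg (z k)]
        _ ≤ ∑' k, |a k| := by
            refine Summable.tsum_le_tsum (fun k => ?_) ?_ (scalar_summable a)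
            · rw [norm_smul, Real.norm_eq_abs]
              nlinarith [abs_nonneg (a k), hz1 k, norm_nonneg (z k)]
            · refine (scalar_summable a).of_nonneg_of_le (fun k => norm_nonneg _) (fun k => ?_)
              rw [norm_smul, Real.norm_eq_abs]
              nlinarith [abs_nonneg (a k), hz1 k, norm_nonneg (z k)]
        _ = ‖a‖ := (scalar_norm a).symm)

lemma sumOp_apply (z : ℕ → lp X 1) (hz1 : ∀ k, ‖z k‖ ≤ 1) (a : ℓ¹) :
    sumOp z hz1 a = ∑' k, a k • z k := rfl

lemma sumOp_mem (Z : Submodule ℝ (lp X 1)) (hZc : IsClosed (Z : Set (lp X 1)))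
    (z : ℕ → lp X 1) (hz1 : ∀ k, ‖z k‖ ≤ 1) (hzZ : ∀ k, z k ∈ Z) (a : ℓ¹) :
    sumOp z hz1 a ∈ Z := by
  have hs := (smul_summable z hz1 a).hasSum
  refine hZc.mem_of_tendsto hs (Eventually.of_forall (fun s => ?_))
  exact Submodule.sum_mem Z (fun k _ => Z.smul_mem _ (hzZ k))

/-- coordinates of `sumOp` -/
lemma sumOp_coord (z : ℕ → lp X 1) (hz1 : ∀ k, ‖z k‖ ≤ 1) (a : ℓ¹) (n : ℕ) :
    (sumOp z hz1 a : ∀ m, X m) n = ∑' k, a k • (z k : ∀ m, X m) n := by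
  classical
  let ev : lp X 1 →L[ℝ] X n :=
    LinearMap.mkContinuous
      { toFun := fun x => x n
        map_add' := fun x y => by simp [lp.coeFn_add]
        map_smul' := fun c x => by simp [lp.coeFn_smul] }
      1 (fun x => by rw [one_mul]; exact lp.norm_apply_le_norm (by norm_num) x n)
  have := ev.map_tsum (smul_summable z hz1 a)
  have h2 : ∀ k, ev (a k • z k) = a k • (z k : ∀ m, X m) n := by
    intro k; simp [ev, lp.coeFn_smul]; rfl
  calc (sumOp z hz1 a : ∀ m, X m) n = ev (∑' k, a k • z k) := rfl
    _ = ∑' k, ev (a k • z k) := this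
    _ = ∑' k, a k • (z k : ∀ m, X m) n := by rw [tsum_congr h2]

lemma glide_lower (z : ℕ → lp X 1) (hz1 : ∀ k, ‖z k‖ ≤ 1) (Nk : ℕ → ℕ)
    (hmono : Monotone Nk) (hN0 : Nk 0 = 0)
    (hhead : ∀ k, ∑ n ∈ Finset.range (Nk k), ‖(z k : ∀ m, X m) n‖ ≤ 1/8)
    (hblock : ∀ k, (7:ℝ)/8 ≤ ∑ n ∈ Finset.range (Nk (k+1)), ‖(z k : ∀ m, X m) n‖)
    (a : ℓ¹) : (1/2) * ‖a‖ ≤ ‖sumOp z hz1 a‖ := by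
  classical
  set x := sumOp z hz1 a with hx
  -- coordinatewise norms of the z's, partial sums
  set S : ℕ → ℕ → ℝ := fun j M => ∑ n ∈ Finset.range M, ‖(z j : ∀ m, X m) n‖ with hS
  have hSnonneg : ∀ j M, 0 ≤ S j M := fun j M =>
    Finset.sum_nonneg (fun n _ => norm_nonneg _)
  have hSle : ∀ j M, S j M ≤ 1 := by
    intro j M
    refine le_trans ?_ (hz1 j)
    exact sum_le_hasSum _ (fun n _ => norm_nonneg _) (hasSum_norm1 (z j))
  have hSmono : ∀ j, Monotone (S j) := by
    intro j M M' hMM'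
    exact Finset.sum_le_sum_of_subset_of_nonneg (Finset.range_subset_range.2 hMM')
      (fun n _ _ => norm_nonneg _)
  -- summability facts
  have hanorm : ∀ (j : ℕ) (n : ℕ), ‖a j • (z j : ∀ m, X m) n‖ = |a j| * ‖(z j : ∀ m, X m) n‖ := by
    intro j n; rw [norm_smul, Real.norm_eq_abs]
  have hcoordle : ∀ (j n : ℕ), ‖(z j : ∀ m, X m) n‖ ≤ 1 :=
    fun j n => (coord_le_norm (z j) n).trans (hz1 j)
  have hsumf : ∀ n : ℕ, Summable (fun j => ‖a j • (z j : ∀ m, X m) n‖) := by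
    intro n
    refine (scalar_summable a).of_nonneg_of_le (fun j => norm_nonneg _) (fun j => ?_)
    rw [hanorm]
    nlinarith [abs_nonneg (a j), hcoordle j n]
  -- per-coordinate lower bound
  have hcoord : ∀ (k n : ℕ),
      2 * (|a k| * ‖(z k : ∀ m, X m) n‖) - ∑' j, |a j| * ‖(z j : ∀ m, X m) n‖
        ≤ ‖(x : ∀ m, X m) n‖ := by
    intro k n
    have hf : Summable (fun j => a j • (z j : ∀ m, X m) n) := Summable.of_norm (hsumf n)
    have h1 : (x : ∀ m, X m) n = a k • (z k : ∀ m, X m) n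
        + ∑' j, if j = k then 0 else a j • (z j : ∀ m, X m) n := by
      rw [sumOp_coord]
      exact Summable.tsum_eq_add_tsum_ite hf k
    have h2 : ‖∑' j, if j = k then 0 else a j • (z j : ∀ m, X m) n‖
        ≤ ∑' j, if j = k then 0 else ‖a j • (z j : ∀ m, X m) n‖ := by
      have hs2 : Summable (fun j => if j = k then 0 else ‖a j • (z j : ∀ m, X m) n‖) := by
        refine (hsumf n).of_nonneg_of_le (fun j => by positivity) (fun j => ?_)
        split <;> simp [norm_nonneg]
      calc ‖∑' j, if j = k then 0 else a j • (z j : ∀ m, X m) n‖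
          ≤ ∑' j, ‖if j = k then 0 else a j • (z j : ∀ m, X m) n‖ := by
            apply norm_tsum_le_tsum_norm
            refine hs2.congr (fun j => ?_)
            split <;> simp
        _ = ∑' j, if j = k then 0 else ‖a j • (z j : ∀ m, X m) n‖ := by
            refine tsum_congr (fun j => ?_)
            split <;> simp
    have h3 : ∑' j, (if j = k then 0 else ‖a j • (z j : ∀ m, X m) n‖)
        = (∑' j, ‖a j • (z j : ∀ m, X m) n‖) - ‖a k • (z k : ∀ m, X m) n‖ := by
      have := Summable.tsum_eq_add_tsum_ite (hsumf n) k
      linarith [this]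
    have h4 : ‖a k • (z k : ∀ m, X m) n‖
        - ‖∑' j, if j = k then 0 else a j • (z j : ∀ m, X m) n‖ ≤ ‖(x : ∀ m, X m) n‖ := by
      rw [h1]
      have := norm_sub_norm_le (a k • (z k : ∀ m, X m) n)
        (-(∑' j, if j = k then 0 else a j • (z j : ∀ m, X m) n))
      simpa [sub_neg_eq_add] using this
    have h5 := Summable.tsum_eq_add_tsum_ite (hsumf n) k
    have h6 : ∀ j, ‖a j • (z j : ∀ m, X m) n‖ = |a j| * ‖(z j : ∀ m, X m) n‖ := fun j => hanorm j n
    have h7 : ∑' j, |a j| * ‖(z j : ∀ m, X m) n‖ = ∑' j, ‖a j • (z j : ∀ m, X m) n‖ :=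
      tsum_congr (fun j => (h6 j).symm)
    rw [h7, ← h6 k]
    linarith [h2, h3, h4]
  -- decomposition of initial sums into blocks
  have hdecomp : ∀ (g : ℕ → ℝ) (K : ℕ), ∑ n ∈ Finset.range (Nk K), g n
      = ∑ k ∈ Finset.range K, ∑ n ∈ Finset.Ico (Nk k) (Nk (k+1)), g n := by
    intro g K
    induction K with
    | zero => simp [hN0]
    | succ K ih =>
        rw [Finset.sum_range_succ, ← ih]
        simp only [Finset.range_eq_Ico]
        exact (Finset.sum_Ico_consecutive g (Nat.zero_le (Nk K)) (hmono (Nat.le_succ K))).symm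
  -- summabilities
  have hsum1 : ∀ M M' : ℕ, M ≤ M' → Summable (fun j => |a j| * (S j M' - S j M)) := by
    intro M M' hMM'
    refine (scalar_summable a).of_nonneg_of_le (fun j => ?_) (fun j => ?_)
    · exact mul_nonneg (abs_nonneg _) (sub_nonneg.2 (hSmono j hMM'))
    · nlinarith [abs_nonneg (a j), hSle j M', hSnonneg j M, hSmono j hMM']
  have hsumcoord : ∀ n : ℕ, Summable (fun j => |a j| * ‖(z j : ∀ m, X m) n‖) := by
    intro n
    exact (hsumf n).congr (fun j => hanorm j n)
  -- per block bound
  have hblockbound : ∀ k,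
      2 * |a k| * (S k (Nk (k+1)) - S k (Nk k))
        - ∑' j, |a j| * (S j (Nk (k+1)) - S j (Nk k))
      ≤ ∑ n ∈ Finset.Ico (Nk k) (Nk (k+1)), ‖(x : ∀ m, X m) n‖ := by
    intro k
    have hle : Nk k ≤ Nk (k+1) := hmono (Nat.le_succ k)
    have h5 : ∑ n ∈ Finset.Ico (Nk k) (Nk (k+1)),
        (2 * (|a k| * ‖(z k : ∀ m, X m) n‖) - ∑' j, |a j| * ‖(z j : ∀ m, X m) n‖)
        ≤ ∑ n ∈ Finset.Ico (Nk k) (Nk (k+1)), ‖(x : ∀ m, X m) n‖ :=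
      Finset.sum_le_sum (fun n _ => hcoord k n)
    refine le_trans (le_of_eq ?_) h5
    rw [Finset.sum_sub_distrib]
    have e1 : ∑ n ∈ Finset.Ico (Nk k) (Nk (k+1)), 2 * (|a k| * ‖(z k : ∀ m, X m) n‖)
        = 2 * |a k| * (S k (Nk (k+1)) - S k (Nk k)) := by
      rw [show (fun n => 2 * (|a k| * ‖(z k : ∀ m, X m) n‖)) = fun n => (2 * |a k|) * ‖(z k : ∀ m, X m) n‖ from funext (fun n => by ring)]
      rw [← Finset.mul_sum, Finset.sum_Ico_eq_sub _ hle]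
    have e2 : ∑ n ∈ Finset.Ico (Nk k) (Nk (k+1)), ∑' j, |a j| * ‖(z j : ∀ m, X m) n‖
        = ∑' j, |a j| * (S j (Nk (k+1)) - S j (Nk k)) := by
      rw [← Summable.tsum_finsetSum (fun n _ => hsumcoord n)]
      refine tsum_congr (fun j => ?_)
      rw [← Finset.mul_sum, Finset.sum_Ico_eq_sub _ hle]
    rw [e1, e2]
  -- the K-truncated bound
  have hK : ∀ K : ℕ, (3/2) * (∑ k ∈ Finset.range K, |a k|) - ‖a‖ ≤ ‖x‖ := by
    intro K
    have h8 : ∑ n ∈ Finset.range (Nk K), ‖(x : ∀ m, X m) n‖ ≤ ‖x‖ :=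
      sum_le_hasSum _ (fun n _ => norm_nonneg _) (hasSum_norm1 x)
    rw [hdecomp (fun n => ‖(x : ∀ m, X m) n‖) K] at h8
    have h9 : ∑ k ∈ Finset.range K,
        (2 * |a k| * (S k (Nk (k+1)) - S k (Nk k))
          - ∑' j, |a j| * (S j (Nk (k+1)) - S j (Nk k)))
        ≤ ∑ k ∈ Finset.range K, ∑ n ∈ Finset.Ico (Nk k) (Nk (k+1)), ‖(x : ∀ m, X m) n‖ :=
      Finset.sum_le_sum (fun k _ => hblockbound k)
    rw [Finset.sum_sub_distrib] at h9
    -- first piece lower bound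
    have h10 : ∑ k ∈ Finset.range K, (3/2) * |a k|
        ≤ ∑ k ∈ Finset.range K, 2 * |a k| * (S k (Nk (k+1)) - S k (Nk k)) := by
      refine Finset.sum_le_sum (fun k _ => ?_)
      have := hhead k
      have := hblock k
      have hSk1 : S k (Nk k) ≤ 1/8 := hhead k
      have hSk2 : (7:ℝ)/8 ≤ S k (Nk (k+1)) := hblock k
      nlinarith [abs_nonneg (a k)]
    -- second piece upper bound
    have h11 : ∑ k ∈ Finset.range K, ∑' j, |a j| * (S j (Nk (k+1)) - S j (Nk k)) ≤ ‖a‖ := by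
      have hswap : ∑ k ∈ Finset.range K, ∑' j, |a j| * (S j (Nk (k+1)) - S j (Nk k))
          = ∑' j, ∑ k ∈ Finset.range K, |a j| * (S j (Nk (k+1)) - S j (Nk k)) :=
        (Summable.tsum_finsetSum (fun k _ => hsum1 _ _ (hmono (Nat.le_succ k)))).symm
      rw [hswap]
      have htel : ∀ j, ∑ k ∈ Finset.range K, |a j| * (S j (Nk (k+1)) - S j (Nk k))
          = |a j| * (S j (Nk K) - S j (Nk 0)) := by
        intro j
        rw [← Finset.mul_sum, Finset.sum_range_sub (fun k => S j (Nk k))]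
      calc ∑' j, ∑ k ∈ Finset.range K, |a j| * (S j (Nk (k+1)) - S j (Nk k))
          = ∑' j, |a j| * (S j (Nk K) - S j (Nk 0)) := tsum_congr htel
        _ ≤ ∑' j, |a j| := by
            refine Summable.tsum_le_tsum (fun j => ?_) ?_ (scalar_summable a)
            · nlinarith [abs_nonneg (a j), hSle j (Nk K), hSnonneg j (Nk 0),
                hSmono j (hmono (Nat.zero_le K))]
            · refine Summable.congr (hsum1 (Nk 0) (Nk K) (hmono (Nat.zero_le K))) (fun j => rfl)
        _ = ‖a‖ := (scalar_norm a).symm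
    calc (3/2) * (∑ k ∈ Finset.range K, |a k|) - ‖a‖
        = ∑ k ∈ Finset.range K, (3/2) * |a k| - ‖a‖ := by rw [Finset.mul_sum]
      _ ≤ ∑ k ∈ Finset.range K, 2 * |a k| * (S k (Nk (k+1)) - S k (Nk k))
          - ∑ k ∈ Finset.range K, ∑' j, |a j| * (S j (Nk (k+1)) - S j (Nk k)) := by
          linarith [h10, h11]
      _ ≤ ∑ k ∈ Finset.range K, ∑ n ∈ Finset.Ico (Nk k) (Nk (k+1)), ‖(x : ∀ m, X m) n‖ := h9
      _ ≤ ‖x‖ := h8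
  -- pass to the limit
  have ht : Tendsto (fun K => (3/2) * (∑ k ∈ Finset.range K, |a k|) - ‖a‖) atTop
      (𝓝 ((3/2) * ‖a‖ - ‖a‖)) := by
    have h := (scalar_summable a).hasSum.tendsto_sum_nat
    rw [← (scalar_norm a)] at h
    exact (h.const_mul (3/2)).sub_const ‖a‖
  have := le_of_tendsto ht (Eventually.of_forall hK)
  linarith [this]


lemma caseB (Z : Submodule ℝ (lp X 1)) (hZc : IsClosed (Z : Set (lp X 1)))
    (hB : ∀ N : ℕ, ∃ z : lp X 1, z ∈ Z ∧ ‖z‖ = 1 ∧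
      ∑ n ∈ Finset.range N, ‖(z : ∀ m, X m) n‖ < 1/8) :
    ∃ T : ℓ¹ →L[ℝ] lp X 1, (∀ v, T v ∈ Z) ∧
      ∃ c : ℝ, 0 < c ∧ ∀ v, c * ‖v‖ ≤ ‖T v‖ := by
  classical
  choose zsel hzsel1 hzsel2 hzsel3 using hB
  have hnext : ∀ N : ℕ, ∃ M : ℕ, N < M ∧
      (7:ℝ)/8 ≤ ∑ n ∈ Finset.range M, ‖(zsel N : ∀ m, X m) n‖ := by
    intro N
    have ht : Tendsto (fun M => ∑ n ∈ Finset.range M, ‖(zsel N : ∀ m, X m) n‖)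
        atTop (𝓝 1) := by
      have := (hasSum_norm1 (zsel N)).tendsto_sum_nat
      rwa [hzsel2 N] at this
    have hev : ∀ᶠ M in atTop, (7:ℝ)/8 ≤ ∑ n ∈ Finset.range M, ‖(zsel N : ∀ m, X m) n‖ :=
      Filter.Tendsto.eventually_const_le (by norm_num) ht
    obtain ⟨M₀, hM₀⟩ := eventually_atTop.1 hev
    exact ⟨max (N+1) M₀, lt_of_lt_of_le (Nat.lt_succ_self N) (le_max_left _ _),
      hM₀ _ (le_max_right _ _)⟩
  choose nextN hnext1 hnext2 using hnext
  let Nk : ℕ → ℕ := fun k => Nat.rec 0 (fun _ N => nextN N) k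
  have hNk0 : Nk 0 = 0 := rfl
  have hNksucc : ∀ k, Nk (k+1) = nextN (Nk k) := fun k => rfl
  have hmono : Monotone Nk :=
    monotone_nat_of_le_succ (fun k => le_of_lt (by rw [hNksucc] ; exact hnext1 (Nk k)))
  let z : ℕ → lp X 1 := fun k => zsel (Nk k)
  have hz1 : ∀ k, ‖z k‖ ≤ 1 := fun k => le_of_eq (hzsel2 (Nk k))
  refine ⟨sumOp z hz1, fun v => sumOp_mem Z hZc z hz1 (fun k => hzsel1 (Nk k)) v,
    1/2, by norm_num, fun v => ?_⟩
  exact glide_lower z hz1 Nk hmono hNk0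
    (fun k => le_of_lt (hzsel3 (Nk k)))
    (fun k => by rw [hNksucc]; exact hnext2 (Nk k)) v

lemma memℓp1_of_le {f : ∀ n, X n} {g : ℕ → ℝ} (hg : Summable g) (h : ∀ n, ‖f n‖ ≤ g n) :
    Memℓp f 1 := by
  apply memℓp_gen
  simp only [ENNReal.toReal_one, Real.rpow_one]
  exact hg.of_nonneg_of_le (fun n => norm_nonneg _) h

/-- evaluation at a coordinate as a CLM -/
def evalCLM (n : ℕ) : lp X 1 →L[ℝ] X n :=
  LinearMap.mkContinuous
    { toFun := fun x => x n
      map_add' := fun x y => by simp [lp.coeFn_add]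
      map_smul' := fun c x => by simp [lp.coeFn_smul] }
    1 (fun x => by rw [one_mul]; exact lp.norm_apply_le_norm (by norm_num) x n)

@[simp] lemma evalCLM_apply (n : ℕ) (x : lp X 1) : evalCLM n x = x n := rfl

lemma headmem (N : ℕ) (x : lp X 1) : Memℓp (fun n => if n < N then x n else 0) 1 := by
  apply memℓp1_of_le (summable_norm1 x)
  intro n
  by_cases h : n < N <;> simp [h]

/-- truncation to coordinates `< N` as a CLM -/
def headCLM (N : ℕ) : lp X 1 →L[ℝ] lp X 1 :=
  LinearMap.mkContinuous
    { toFun := fun x => ⟨fun n => if n < N then x n else 0, headmem N x⟩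
      map_add' := fun x y => by
        ext n; by_cases h : n < N <;> simp [lp.coeFn_add, h] <;>
          change _ = (if n < N then (x : ∀ m, X m) n else 0) + (if n < N then (y : ∀ m, X m) n else 0) <;>
          simp [h]
      map_smul' := fun c x => by
        ext n; by_cases h : n < N <;> simp [lp.coeFn_smul, h] }
    1 (fun x => by
      rw [one_mul]
      have h1 := hasSum_norm1 (⟨fun n => if n < N then x n else 0, headmem N x⟩ : lp X 1)
      have h2 := hasSum_norm1 x
      refine hasSum_le (fun n => ?_) h1 h2
      by_cases h : n < N <;> simp [h])

@[simp] lemma headCLM_apply (N : ℕ) (x : lp X 1) (n : ℕ) :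
    headCLM N x n = if n < N then x n else 0 := rfl

lemma norm_headCLM (N : ℕ) (x : lp X 1) :
    ‖headCLM N x‖ = ∑ n ∈ Finset.range N, ‖x n‖ := by
  rw [norm1]
  rw [tsum_eq_sum (s := Finset.range N) (f := fun n => ‖headCLM N x n‖)]
  · refine Finset.sum_congr rfl (fun n hn => ?_)
    simp [Finset.mem_range.1 hn]
  · intro n hn
    rw [Finset.mem_range] at hn
    simp [hn]


@[simp] lemma evalCLM_apply' (n : ℕ) (x : lp X 1) : evalCLM n x = (x : ∀ m, X m) n := rfl

lemma head_norm_of_supp (N : ℕ) (z : lp X 1)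
    (hs : ∀ n, N + 1 ≤ n → (z : ∀ m, X m) n = 0) :
    ‖headCLM N z‖ = ‖z‖ - ‖(z : ∀ m, X m) N‖ := by
  have h1 : ‖z‖ = ∑ n ∈ Finset.range (N+1), ‖(z : ∀ m, X m) n‖ := by
    rw [norm1]
    refine tsum_eq_sum (fun n hn => ?_)
    rw [Finset.mem_range] at hn
    rw [hs n (by omega)]
    simp
  rw [norm_headCLM, h1, Finset.sum_range_succ]
  ring

lemma headCLM_norm_le (N : ℕ) : ‖(headCLM N : lp X 1 →L[ℝ] lp X 1)‖ ≤ 1 :=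
  LinearMap.mkContinuous_norm_le _ (by norm_num) _

open Classical in
/-- a norming functional, or 0 -/
noncomputable def gdual (y : lp X 1) : lp X 1 →L[ℝ] ℝ :=
  if hy : y = 0 then 0 else (exists_dual_vector ℝ y (norm_ne_zero_iff.2 hy)).choose

open Classical in
lemma gdual_norm_le (y : lp X 1) : ‖gdual y‖ ≤ 1 := by
  unfold gdual
  split
  · simp
  · next hy => exact le_of_eq (exists_dual_vector ℝ y (norm_ne_zero_iff.2 hy)).choose_spec.1

open Classical in
lemma gdual_self (y : lp X 1) : gdual y y = ‖y‖ := by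
  unfold gdual
  split
  · next hy => subst hy; simp
  · next hy =>
      have := (exists_dual_vector ℝ y (norm_ne_zero_iff.2 hy)).choose_spec.2
      simpa using this

section General
variable {E F : Type*} [NormedAddCommGroup E] [NormedSpace ℝ E]
  [NormedAddCommGroup F] [NormedSpace ℝ F]

lemma map_isClosed [CompleteSpace E] (Z : Submodule ℝ E) (hZc : IsClosed (Z : Set E))
    (A : E →L[ℝ] F) {c : ℝ} (hc : 0 < c) (hbb : ∀ z ∈ Z, c * ‖z‖ ≤ ‖A z‖) :
    IsClosed ((Z.map (A : E →ₗ[ℝ] F) : Submodule ℝ F) : Set F) := by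
  apply IsSeqClosed.isClosed
  intro y yl hy hyl
  choose z hz hAz using fun i => Submodule.mem_map.1 (hy i)
  simp only [ContinuousLinearMap.coe_coe] at hAz
  have hcy : CauchySeq y := hyl.cauchySeq
  have hcz : CauchySeq z := by
    rw [Metric.cauchySeq_iff] at hcy ⊢
    intro ε hε
    obtain ⟨N, hN⟩ := hcy (c * ε) (by positivity)
    refine ⟨N, fun m hm n hn => ?_⟩
    have h1 := hbb _ (Z.sub_mem (hz m) (hz n))
    have h2 : A (z m - z n) = y m - y n := by simp [map_sub, hAz]
    rw [h2] at h1
    have := hN m hm n hn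
    rw [dist_eq_norm] at this ⊢
    nlinarith
  obtain ⟨zl, hzl⟩ := cauchySeq_tendsto_of_complete hcz
  have hzlZ : zl ∈ Z := hZc.mem_of_tendsto hzl (Eventually.of_forall hz)
  refine Submodule.mem_map.2 ⟨zl, hzlZ, ?_⟩
  have : Tendsto (fun i => A (z i)) atTop (𝓝 (A zl)) := (A.continuous.tendsto _).comp hzl
  simp only [hAz] at this
  exact tendsto_nhds_unique this hyl

lemma map_not_finiteDimensional (Z : Submodule ℝ E)
    (A : E →L[ℝ] F) {c : ℝ} (hc : 0 < c) (hbb : ∀ z ∈ Z, c * ‖z‖ ≤ ‖A z‖)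
    (hZnf : ¬ FiniteDimensional ℝ Z) :
    ¬ FiniteDimensional ℝ (Z.map (A : E →ₗ[ℝ] F)) := by
  intro hfd
  apply hZnf
  let φ : Z →ₗ[ℝ] Z.map (A : E →ₗ[ℝ] F) :=
    ((A : E →ₗ[ℝ] F).comp Z.subtype).codRestrict _ (fun z => Submodule.mem_map_of_mem z.2)
  have hinj : Function.Injective φ := by
    intro a b hab
    have : A (a : E) = A (b : E) := congrArg Subtype.val hab
    have h1 := hbb _ (Z.sub_mem a.2 b.2)
    rw [map_sub, this, sub_self, norm_zero] at h1
    have : ‖(a : E) - b‖ = 0 := le_antisymm (by nlinarith [norm_nonneg ((a:E) - b)]) (norm_nonneg _)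
    have : (a : E) = b := by rwa [← sub_eq_zero, ← norm_eq_zero]
    exact Subtype.ext this
  exact FiniteDimensional.of_injective φ hinj

lemma pullback (Z : Submodule ℝ E)
    (A : E →L[ℝ] F) {c : ℝ} (hc : 0 < c) (hbb : ∀ z ∈ Z, c * ‖z‖ ≤ ‖A z‖)
    (S : ℓ¹ →L[ℝ] F) (hS : ∀ v, S v ∈ Z.map (A : E →ₗ[ℝ] F))
    {cS : ℝ} (hcS : 0 < cS) (hSl : ∀ v, cS * ‖v‖ ≤ ‖S v‖) :
    ∃ T : ℓ¹ →L[ℝ] E, (∀ v, T v ∈ Z) ∧ ∃ c' : ℝ, 0 < c' ∧ ∀ v, c' * ‖v‖ ≤ ‖T v‖ := by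
  have hmem : ∀ v : ℓ¹, ∃ z, z ∈ Z ∧ A z = S v := fun v => Submodule.mem_map.1 (hS v)
  choose t ht hAt using hmem
  have hinjZ : ∀ z ∈ Z, ∀ z' ∈ Z, A z = A z' → z = z' := by
    intro z hz z' hz' hzz
    have h1 := hbb _ (Z.sub_mem hz hz')
    rw [map_sub, hzz, sub_self, norm_zero] at h1
    have : ‖z - z'‖ = 0 := le_antisymm (by nlinarith [norm_nonneg (z - z')]) (norm_nonneg _)
    rwa [← sub_eq_zero, ← norm_eq_zero]
  have hadd : ∀ u v, t (u + v) = t u + t v := by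
    intro u v
    refine hinjZ _ (ht _) _ (Z.add_mem (ht u) (ht v)) ?_
    rw [map_add, hAt, hAt, hAt, map_add]
  have hsmul : ∀ (r : ℝ) (v), t (r • v) = r • t v := by
    intro r v
    refine hinjZ _ (ht _) _ (Z.smul_mem r (ht v)) ?_
    rw [map_smul, hAt, hAt, map_smul]
  have hbound : ∀ v, ‖t v‖ ≤ (c⁻¹ * ‖S‖) * ‖v‖ := by
    intro v
    have h1 := hbb _ (ht v)
    rw [hAt] at h1
    have h2 : ‖S v‖ ≤ ‖S‖ * ‖v‖ := S.le_opNorm v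
    rw [mul_assoc, le_inv_mul_iff₀ hc]
    exact h1.trans h2
  refine ⟨LinearMap.mkContinuous ⟨⟨t, hadd⟩, hsmul⟩ (c⁻¹ * ‖S‖) hbound, fun v => ht v, ?_⟩
  refine ⟨cS / (‖A‖ + 1), by positivity, fun v => ?_⟩
  have h1 : cS * ‖v‖ ≤ ‖S v‖ := hSl v
  rw [← hAt v] at h1
  have h2 : ‖A (t v)‖ ≤ (‖A‖ + 1) * ‖t v‖ := by
    calc ‖A (t v)‖ ≤ ‖A‖ * ‖t v‖ := A.le_opNorm _
      _ ≤ (‖A‖ + 1) * ‖t v‖ := by nlinarith [norm_nonneg (t v)]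
  have h3 : (0:ℝ) < ‖A‖ + 1 := by positivity
  have : cS * ‖v‖ ≤ (‖A‖ + 1) * ‖t v‖ := h1.trans h2
  rw [div_mul_eq_mul_div, div_le_iff₀ h3]
  calc cS * ‖v‖ ≤ (‖A‖ + 1) * ‖t v‖ := this
    _ = ‖(LinearMap.mkContinuous ⟨⟨t, hadd⟩, hsmul⟩ (c⁻¹ * ‖S‖) hbound) v‖ * (‖A‖ + 1) := by
        rw [mul_comm]; rfl


lemma fd_of_ker {V W : Type*} [AddCommGroup V] [Module ℝ V] [AddCommGroup W] [Module ℝ W]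
    [FiniteDimensional ℝ W] (φ : V →ₗ[ℝ] W) (h : FiniteDimensional ℝ (LinearMap.ker φ)) :
    FiniteDimensional ℝ V := by
  have h2 : FiniteDimensional ℝ (V ⧸ LinearMap.ker φ) :=
    Module.Finite.equiv φ.quotKerEquivRange.symm
  have h3 := rank_quotient_add_rank_of_divisionRing (LinearMap.ker φ)
  haveI := h
  haveI := h2
  have h4 : Module.rank ℝ V < Cardinal.aleph0 := by
    rw [← h3]
    exact Cardinal.add_lt_aleph0 (Module.rank_lt_aleph0 ℝ _) (Module.rank_lt_aleph0 ℝ _)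
  exact Module.rank_lt_aleph0_iff.mp h4

lemma infdim_inf_ker (V : Submodule ℝ E) (hV : ¬ FiniteDimensional ℝ V)
    (f : E →L[ℝ] ℝ) : ¬ FiniteDimensional ℝ (V ⊓ LinearMap.ker (f : E →ₗ[ℝ] ℝ) : Submodule ℝ E) := by
  intro hfd
  apply hV
  let φ : V →ₗ[ℝ] ℝ := (f : E →ₗ[ℝ] ℝ).comp V.subtype
  have hker : FiniteDimensional ℝ (LinearMap.ker φ) := by
    let β : LinearMap.ker φ →ₗ[ℝ] (V ⊓ LinearMap.ker (f : E →ₗ[ℝ] ℝ) : Submodule ℝ E) :=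
      { toFun := fun x => ⟨(x : V), ⟨(x : V).2, x.2⟩⟩
        map_add' := fun x y => rfl
        map_smul' := fun c x => rfl }
    have hβ : Function.Injective β := by
      intro a b hab
      have h1 : (β a : E) = (β b : E) := congrArg Subtype.val hab
      have h2 : ((a : V) : E) = ((b : V) : E) := h1
      exact Subtype.ext (Subtype.ext h2)
    exact FiniteDimensional.of_injective β hβ
  exact fd_of_ker φ hker

end General

section GoodSeq

/-- Build an orthogonal-ish sequence with small `N`-th coordinate. -/
lemma exists_goodseq (N : ℕ) (Z : Submodule ℝ (lp X 1)) (hZc : IsClosed (Z : Set (lp X 1)))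
    (hZfd : ¬ FiniteDimensional ℝ Z) (ε : ℕ → ℝ) (hε : ∀ k, 0 < ε k)
    (hsmall : ∀ V : Submodule ℝ (lp X 1), V ≤ Z → IsClosed (V : Set (lp X 1)) →
      ¬ FiniteDimensional ℝ V → ∀ c : ℝ, 0 < c →
      ∃ v, v ∈ V ∧ ‖v‖ = 1 ∧ ‖(v : ∀ m, X m) N‖ < c) :
    ∃ w : ℕ → lp X 1, ∃ f : ℕ → (lp X 1 →L[ℝ] ℝ),
      (∀ k, w k ∈ Z) ∧ (∀ k, ‖w k‖ = 1) ∧ (∀ k, ‖(w k : ∀ m, X m) N‖ < ε k) ∧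
      (∀ k, ‖f k‖ ≤ 1) ∧ (∀ k, f k (w k) = ‖headCLM N (w k)‖) ∧
      (∀ j k, j < k → f j (w k) = 0) := by
  classical
  -- the state: a suitable subspace
  let St := {V : Submodule ℝ (lp X 1) // V ≤ Z ∧ IsClosed (V : Set (lp X 1)) ∧
    ¬ FiniteDimensional ℝ V}
  let pick : ℕ → St → lp X 1 := fun k s =>
    (hsmall s.1 s.2.1 s.2.2.1 s.2.2.2 (ε k) (hε k)).choose
  have pick_spec : ∀ k s, pick k s ∈ s.1 ∧ ‖pick k s‖ = 1 ∧
      ‖(pick k s : ∀ m, X m) N‖ < ε k := fun k s =>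
    (hsmall s.1 s.2.1 s.2.2.1 s.2.2.2 (ε k) (hε k)).choose_spec
  let fof : lp X 1 → (lp X 1 →L[ℝ] ℝ) := fun y =>
    (gdual (headCLM N y)).comp (headCLM N)
  let nextSt : ℕ → St → St := fun k s =>
    ⟨s.1 ⊓ LinearMap.ker ((fof (pick k s) : lp X 1 →ₗ[ℝ] ℝ)),
      le_trans inf_le_left s.2.1,
      by
        rw [Submodule.coe_inf]
        exact IsClosed.inter s.2.2.1 (ContinuousLinearMap.isClosed_ker (fof (pick k s))),
      infdim_inf_ker s.1 s.2.2.2 (fof (pick k s))⟩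
  let st : ℕ → St := fun k => Nat.rec (⟨Z, le_refl Z, hZc, hZfd⟩ : St) (fun k s => nextSt k s) k
  have hst_succ : ∀ k, st (k+1) = nextSt k (st k) := fun k => rfl
  let w : ℕ → lp X 1 := fun k => pick k (st k)
  let f : ℕ → (lp X 1 →L[ℝ] ℝ) := fun k => fof (w k)
  -- monotonicity of states
  have hmono : ∀ j k : ℕ, j ≤ k → (st k).1 ≤ (st j).1 := by
    intro j k hjk
    induction k with
    | zero => cases Nat.le_zero.1 hjk; exact le_refl _
    | succ k ih =>
        rcases Nat.lt_or_ge j (k+1) with hc | hc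
        · exact le_trans (inf_le_left : (nextSt k (st k)).1 ≤ (st k).1) (ih (Nat.lt_succ_iff.1 hc))
        · have : j = k+1 := le_antisymm hjk hc
          subst this; exact le_refl _
  have hker : ∀ j k, j < k → (st k).1 ≤ LinearMap.ker ((f j : lp X 1 →ₗ[ℝ] ℝ)) := by
    intro j k hjk
    have h1 : (st (j+1)).1 ≤ LinearMap.ker ((f j : lp X 1 →ₗ[ℝ] ℝ)) := inf_le_right
    exact le_trans (hmono (j+1) k hjk) h1
  refine ⟨w, f, fun k => (st k).2.1 (pick_spec k (st k)).1, fun k => (pick_spec k (st k)).2.1,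
    fun k => (pick_spec k (st k)).2.2, fun k => ?_, fun k => ?_, fun j k hjk => ?_⟩
  · calc ‖f k‖ ≤ ‖gdual (headCLM N (w k))‖ * ‖(headCLM N : lp X 1 →L[ℝ] lp X 1)‖ :=
        ContinuousLinearMap.opNorm_comp_le _ _
      _ ≤ 1 * 1 := mul_le_mul (gdual_norm_le _) (headCLM_norm_le N) (norm_nonneg _) zero_le_one
      _ = 1 := by norm_num
  · show gdual (headCLM N (w k)) (headCLM N (w k)) = ‖headCLM N (w k)‖
    exact gdual_self _
  · have hw : w k ∈ (st k).1 := (pick_spec k (st k)).1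
    exact hker j k hjk hw

end GoodSeq

section Coeff

lemma geom_half_le (m : ℕ) : ∑ i ∈ Finset.range m, ((1:ℝ)/2)^i ≤ 2 := by
  have h := geom_sum_eq (by norm_num : (1/2:ℝ) ≠ 1) m
  rw [h]
  have h2 : (0:ℝ) ≤ (1/2)^m := by positivity
  have h3 : ((1/2:ℝ)^m - 1)/((1/2) - 1) = (1 - (1/2)^m) * 2 := by ring
  rw [h3]
  nlinarith

lemma coeff_bound (N : ℕ) (w : ℕ → lp X 1) (f : ℕ → (lp X 1 →L[ℝ] ℝ))
    (hw1 : ∀ k, ‖w k‖ = 1)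
    (hwN : ∀ k, ‖(w k : ∀ m, X m) N‖ ≤ (1/6)^(k+2))
    (hf1 : ∀ k, ‖f k‖ ≤ 1)
    (hdiag : ∀ k, 1/2 ≤ f k (w k))
    (horth : ∀ j k, j < k → f j (w k) = 0)
    (m : ℕ) (b : ℕ → ℝ) (hb : ∀ i, m ≤ i → b i = 0) :
    (∀ j, |b j| ≤ 2 * 3^j * ‖∑ i ∈ Finset.range m, b i • w i‖) ∧
    ‖((∑ i ∈ Finset.range m, b i • w i : lp X 1) : ∀ m', X m') N‖
      ≤ (1/2) * ‖∑ i ∈ Finset.range m, b i • w i‖ := by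
  classical
  set v : lp X 1 := ∑ i ∈ Finset.range m, b i • w i with hv
  have hvnn : (0:ℝ) ≤ ‖v‖ := norm_nonneg v
  -- (†)
  have hdagger : ∀ j, f j v = ∑ i ∈ Finset.range (j+1), b i * f j (w i) := by
    intro j
    have h1 : f j v = ∑ i ∈ Finset.range m, b i * f j (w i) := by
      rw [hv, map_sum]
      exact Finset.sum_congr rfl (fun i _ => by rw [map_smul]; rfl)
    set M := max m (j+1) with hM
    have h2 : ∑ i ∈ Finset.range m, b i * f j (w i)
        = ∑ i ∈ Finset.range M, b i * f j (w i) := by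
      refine Finset.sum_subset (Finset.range_subset_range.2 (le_max_left _ _)) (fun i _ hi => ?_)
      rw [Finset.mem_range, not_lt] at hi
      rw [hb i hi, zero_mul]
    have h3 : ∑ i ∈ Finset.range (j+1), b i * f j (w i)
        = ∑ i ∈ Finset.range M, b i * f j (w i) := by
      refine Finset.sum_subset (Finset.range_subset_range.2 (le_max_right _ _)) (fun i _ hi => ?_)
      rw [Finset.mem_range, not_lt] at hi
      rw [horth j i hi, mul_zero]
    rw [h1, h2, ← h3]
  -- key bound
  have hkey : ∀ j, |b j| ≤ 2 * (‖v‖ + ∑ i ∈ Finset.range j, |b i|) := by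
    intro j
    have h1 := hdagger j
    rw [Finset.sum_range_succ] at h1
    have h2 : b j * f j (w j) = f j v - ∑ i ∈ Finset.range j, b i * f j (w i) := by
      linarith
    have h3 : |f j v| ≤ ‖v‖ := by
      calc |f j v| = ‖f j v‖ := (Real.norm_eq_abs _).symm
        _ ≤ ‖f j‖ * ‖v‖ := (f j).le_opNorm v
        _ ≤ 1 * ‖v‖ := mul_le_mul_of_nonneg_right (hf1 j) hvnn
        _ = ‖v‖ := one_mul _
    have h4 : |∑ i ∈ Finset.range j, b i * f j (w i)| ≤ ∑ i ∈ Finset.range j, |b i| := by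
      calc |∑ i ∈ Finset.range j, b i * f j (w i)|
          ≤ ∑ i ∈ Finset.range j, |b i * f j (w i)| := Finset.abs_sum_le_sum_abs _ _
        _ ≤ ∑ i ∈ Finset.range j, |b i| := by
            refine Finset.sum_le_sum (fun i _ => ?_)
            rw [abs_mul]
            have h5 : |f j (w i)| ≤ 1 := by
              calc |f j (w i)| = ‖f j (w i)‖ := (Real.norm_eq_abs _).symm
                _ ≤ ‖f j‖ * ‖w i‖ := (f j).le_opNorm _
                _ ≤ 1 * 1 := mul_le_mul (hf1 j) (le_of_eq (hw1 i)) (norm_nonneg _) zero_le_one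
                _ = 1 := one_mul _
            nlinarith [abs_nonneg (b i)]
    have h6 : |b j| * (1/2) ≤ |b j * f j (w j)| := by
      rw [abs_mul]
      have h7 : |f j (w j)| = f j (w j) := abs_of_nonneg (le_trans (by norm_num) (hdiag j))
      rw [h7]
      exact mul_le_mul_of_nonneg_left (hdiag j) (abs_nonneg _)
    rw [h2] at h6
    have h8 : |f j v - ∑ i ∈ Finset.range j, b i * f j (w i)|
        ≤ |f j v| + |∑ i ∈ Finset.range j, b i * f j (w i)| := abs_sub _ _
    nlinarith [abs_nonneg (b j)]
  -- cumulative bound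
  have hD : ∀ j, ∑ i ∈ Finset.range j, |b i| ≤ ((3:ℝ)^j - 1) * ‖v‖ := by
    intro j
    induction j with
    | zero => simp
    | succ j ih =>
        rw [Finset.sum_range_succ]
        have := hkey j
        have h9 : (3:ℝ)^(j+1) = 3 * 3^j := by ring
        nlinarith [pow_nonneg (by norm_num : (0:ℝ) ≤ 3) j]
  have hbj : ∀ j, |b j| ≤ 2 * 3^j * ‖v‖ := by
    intro j
    have := hkey j
    have := hD j
    nlinarith [pow_nonneg (by norm_num : (0:ℝ) ≤ 3) j]
  refine ⟨hbj, ?_⟩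
  -- final estimate
  have hcoordsum : (v : ∀ m', X m') N = ∑ i ∈ Finset.range m, b i • ((w i : ∀ m', X m') N) := by
    have := map_sum (evalCLM (X := X) N) (fun i => b i • w i) (Finset.range m)
    rw [hv]
    calc ((∑ i ∈ Finset.range m, b i • w i : lp X 1) : ∀ m', X m') N
        = evalCLM (X := X) N (∑ i ∈ Finset.range m, b i • w i) := rfl
      _ = ∑ i ∈ Finset.range m, evalCLM (X := X) N (b i • w i) := this
      _ = ∑ i ∈ Finset.range m, b i • ((w i : ∀ m', X m') N) := by
          refine Finset.sum_congr rfl (fun i _ => ?_)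
          rw [map_smul]
          rfl
  rw [hcoordsum]
  calc ‖∑ i ∈ Finset.range m, b i • ((w i : ∀ m', X m') N)‖
      ≤ ∑ i ∈ Finset.range m, ‖b i • ((w i : ∀ m', X m') N)‖ := norm_sum_le _ _
    _ ≤ ∑ i ∈ Finset.range m, (1/18) * (1/2)^i * ‖v‖ := by
        refine Finset.sum_le_sum (fun i _ => ?_)
        rw [norm_smul, Real.norm_eq_abs]
        have h1 := hbj i
        have h2 := hwN i
        have h3 : (2 * 3^i * ‖v‖) * ((1/6:ℝ)^(i+2)) = (1/18) * (1/2)^i * ‖v‖ := by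
          have h4 : (3:ℝ)^i * (1/6)^i = (1/2)^i := by
            rw [← mul_pow]; norm_num
          have h5 : (1/6:ℝ)^(i+2) = (1/6)^i * (1/36) := by ring
          rw [h5]
          nlinarith [h4]
        have h6 : (0:ℝ) ≤ (1/6)^(i+2) := by positivity
        have h7 : (0:ℝ) ≤ |b i| := abs_nonneg _
        have h8 : (0:ℝ) ≤ ‖(w i : ∀ m', X m') N‖ := norm_nonneg _
        calc |b i| * ‖(w i : ∀ m', X m') N‖ ≤ (2 * 3^i * ‖v‖) * ((1/6)^(i+2)) := by
              apply mul_le_mul h1 h2 h8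
              positivity
          _ = (1/18) * (1/2)^i * ‖v‖ := h3
    _ = (1/18) * (∑ i ∈ Finset.range m, (1/2)^i) * ‖v‖ := by
        rw [mul_assoc, Finset.sum_mul, Finset.mul_sum]
        refine Finset.sum_congr rfl (fun i _ => by ring)
    _ ≤ (1/18) * 2 * ‖v‖ := by
        have := geom_half_le m
        nlinarith
    _ ≤ (1/2) * ‖v‖ := by nlinarith

end Coeff

section SatHead

theorem satHead
    (h : ∀ n, ∀ Z : Submodule ℝ (X n), IsClosed (Z : Set (X n)) →
        ¬ FiniteDimensional ℝ Z →
        ∃ T : lp (fun _ : ℕ => ℝ) 1 →L[ℝ] X n, (∀ v, T v ∈ Z) ∧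
          ∃ c : ℝ, 0 < c ∧ ∀ v, c * ‖v‖ ≤ ‖T v‖) :
    ∀ N : ℕ, ∀ Z : Submodule ℝ (lp X 1), IsClosed (Z : Set (lp X 1)) →
      ¬ FiniteDimensional ℝ Z →
      (∀ z, z ∈ Z → ∀ n, N ≤ n → (z : ∀ m, X m) n = 0) →
      ∃ T : ℓ¹ →L[ℝ] lp X 1, (∀ v, T v ∈ Z) ∧
        ∃ c : ℝ, 0 < c ∧ ∀ v, c * ‖v‖ ≤ ‖T v‖ := by
  intro N
  induction N with
  | zero =>
      intro Z hZc hZfd hsupp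
      exfalso
      apply hZfd
      have hbot : Z = ⊥ := by
        rw [eq_bot_iff]
        intro z hz
        have hz0 : (z : ∀ m, X m) = 0 := funext (fun n => hsupp z hz n (Nat.zero_le n))
        have : z = 0 := by
          apply Subtype.ext
          exact hz0
        simp [this]
      rw [hbot]
      infer_instance
  | succ N ih =>
      intro Z hZc hZfd hsupp
      by_cases hcase : ∃ (V : Submodule ℝ (lp X 1)), V ≤ Z ∧ IsClosed (V : Set (lp X 1)) ∧
          ¬ FiniteDimensional ℝ V ∧ ∃ c : ℝ, 0 < c ∧ ∀ v ∈ V, c * ‖v‖ ≤ ‖(v : ∀ m, X m) N‖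
      · obtain ⟨V, hVZ, hVc, hVfd, c, hc, hbb⟩ := hcase
        have hbbA : ∀ v ∈ V, c * ‖v‖ ≤ ‖evalCLM (X := X) N v‖ := hbb
        obtain ⟨S, hSmem, cS, hcS, hSbb⟩ :=
          h N (V.map ((evalCLM (X := X) N : lp X 1 →L[ℝ] X N) : lp X 1 →ₗ[ℝ] X N))
            (map_isClosed V hVc _ hc hbbA)
            (map_not_finiteDimensional V _ hc hbbA hVfd)
        obtain ⟨T, hT, c', hc', hT2⟩ := pullback V _ hc hbbA S hSmem hcS hSbb
        exact ⟨T, fun v => hVZ (hT v), c', hc', hT2⟩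
      · push_neg at hcase
        have hsmall : ∀ V : Submodule ℝ (lp X 1), V ≤ Z → IsClosed (V : Set (lp X 1)) →
            ¬ FiniteDimensional ℝ V → ∀ c : ℝ, 0 < c →
            ∃ v, v ∈ V ∧ ‖v‖ = 1 ∧ ‖(v : ∀ m, X m) N‖ < c := by
          intro V hVZ hVc hVfd c hc
          obtain ⟨v, hvV, hvlt⟩ := hcase V hVZ hVc hVfd c hc
          have hvne : v ≠ 0 := by
            intro h0
            rw [h0] at hvlt
            simp at hvlt
          have hvn : (0:ℝ) < ‖v‖ := norm_pos_iff.2 hvne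
          refine ⟨‖v‖⁻¹ • v, V.smul_mem _ hvV, ?_, ?_⟩
          · rw [norm_smul, Real.norm_eq_abs, abs_inv, abs_of_pos hvn]
            field_simp
          · have hco : ((‖v‖⁻¹ • v : lp X 1) : ∀ m, X m) N = ‖v‖⁻¹ • (v : ∀ m, X m) N := by
              rw [lp.coeFn_smul]; rfl
            rw [hco, norm_smul, Real.norm_eq_abs, abs_inv, abs_of_pos hvn]
            rw [inv_mul_lt_iff₀ hvn]
            linarith [hvlt]
        obtain ⟨w, f, hwZ, hw1, hwN, hf1, hdiagEq, horth⟩ :=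
          exists_goodseq N Z hZc hZfd (fun k => (1/6)^(k+2)) (fun k => by positivity) hsmall
        have hwsupp : ∀ k, ∀ n, N + 1 ≤ n → ((w k : lp X 1) : ∀ m, X m) n = 0 :=
          fun k => hsupp (w k) (hwZ k)
        have hwNle : ∀ k, ‖((w k : lp X 1) : ∀ m, X m) N‖ ≤ (1/6)^(k+2) :=
          fun k => le_of_lt (hwN k)
        have hεsmall : ∀ k : ℕ, ((1:ℝ)/6)^(k+2) ≤ 1/36 := by
          intro k
          calc ((1:ℝ)/6)^(k+2) ≤ (1/6)^2 :=
              pow_le_pow_of_le_one (by norm_num) (by norm_num) (by omega)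
            _ = 1/36 := by norm_num
        have hdiag : ∀ k, 1/2 ≤ f k (w k) := by
          intro k
          rw [hdiagEq k, head_norm_of_supp N (w k) (hwsupp k), hw1 k]
          linarith [hwNle k, hεsmall k]
        -- the closed span
        set Vsp : Submodule ℝ (lp X 1) := (Submodule.span ℝ (Set.range w)).topologicalClosure
          with hVspdef
        have hVsp_le : Vsp ≤ Z :=
          Submodule.topologicalClosure_minimal _
            (Submodule.span_le.2 (Set.range_subset_iff.2 hwZ)) hZc
        have hVsp_cl : IsClosed (Vsp : Set (lp X 1)) := Submodule.isClosed_topologicalClosure _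
        -- coordinate estimate on the span
        have hspan : ∀ v ∈ Submodule.span ℝ (Set.range w),
            ‖(v : ∀ m, X m) N‖ ≤ (1/2) * ‖v‖ := by
          intro v hv
          rw [Finsupp.mem_span_range_iff_exists_finsupp] at hv
          obtain ⟨cc, hcc⟩ := hv
          set m := (cc.support.sup id) + 1 with hm
          have hsub : cc.support ⊆ Finset.range m := by
            intro i hi
            rw [Finset.mem_range, hm]
            exact Nat.lt_succ_of_le (Finset.le_sup (f := id) hi)
          have hb : ∀ i, m ≤ i → cc i = 0 := by
            intro i hi
            by_contra hne
            have := hsub (Finsupp.mem_support_iff.2 hne)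
            rw [Finset.mem_range] at this
            omega
          have hveq : v = ∑ i ∈ Finset.range m, cc i • w i := by
            rw [← hcc]
            exact Finsupp.sum_of_support_subset cc hsub (fun i a => a • w i)
              (fun i _ => zero_smul ℝ (w i))
          have := (coeff_bound N w f hw1 hwNle hf1 hdiag horth m (fun i => cc i) hb).2
          rw [hveq]
          exact this
        -- extend to closure
        have hVspC : ∀ v, v ∈ Vsp → ‖(v : ∀ m, X m) N‖ ≤ (1/2) * ‖v‖ := by
          have hCcl : IsClosed {v : lp X 1 | ‖evalCLM (X := X) N v‖ ≤ (1/2) * ‖v‖} :=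
            isClosed_le ((evalCLM (X := X) N).continuous.norm)
              (continuous_const.mul continuous_norm)
          intro v hv
          have hsub2 : (Submodule.span ℝ (Set.range w) : Set (lp X 1)) ⊆
              {v : lp X 1 | ‖evalCLM (X := X) N v‖ ≤ (1/2) * ‖v‖} := fun u hu => hspan u hu
          have := closure_minimal hsub2 hCcl
          have hv2 : v ∈ closure (Submodule.span ℝ (Set.range w) : Set (lp X 1)) := by
            rw [hVspdef] at hv
            exact hv
          exact this hv2
        -- infinite-dimensionality
        have hVsp_fd : ¬ FiniteDimensional ℝ Vsp := by
          intro hfd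
          have hli : LinearIndependent ℝ w := by
            rw [linearIndependent_iff']
            intro s g hsum i his
            classical
            set m := (s.sup id) + 1 with hm
            have hsub : s ⊆ Finset.range m := by
              intro i hi
              rw [Finset.mem_range, hm]
              exact Nat.lt_succ_of_le (Finset.le_sup (f := id) hi)
            set b : ℕ → ℝ := fun j => if j ∈ s then g j else 0 with hbdef
            have hb : ∀ j, m ≤ j → b j = 0 := by
              intro j hj
              rw [hbdef]
              simp only
              split
              · next hjs =>
                  exfalso
                  have := hsub hjs
                  rw [Finset.mem_range] at this
                  omega
              · rfl
            have hveq : ∑ j ∈ Finset.range m, b j • w j = 0 := by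
              rw [← hsum]
              refine (Finset.sum_subset hsub (fun j _ hj => ?_)).symm.trans ?_
              · rw [hbdef]; simp [hj]
              · refine Finset.sum_congr rfl (fun j hj => ?_)
                rw [hbdef]; simp [hj]
            have := (coeff_bound N w f hw1 hwNle hf1 hdiag horth m b hb).1 i
            rw [hveq] at this
            simp only [norm_zero, mul_zero] at this
            have hbi : b i = 0 := abs_nonpos_iff.1 this
            rw [hbdef] at hbi
            simpa [his] using hbi
          have hmem : ∀ k, w k ∈ Vsp := fun k =>
            Submodule.le_topologicalClosure _ (Submodule.subset_span (Set.mem_range_self k))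
          let wfam : ℕ → Vsp := fun k => ⟨w k, hmem k⟩
          have hli2 : LinearIndependent ℝ wfam := by
            apply LinearIndependent.of_comp Vsp.subtype
            exact hli
          have := hli2.lt_aleph0_of_finiteDimensional
          rw [Cardinal.mk_nat] at this
          exact lt_irrefl _ this
        -- head projection bounded below on Vsp
        have headBB : ∀ v ∈ Vsp, (1/2) * ‖v‖ ≤ ‖headCLM N v‖ := by
          intro v hv
          rw [head_norm_of_supp N v (fun n hn => hsupp v (hVsp_le hv) n hn)]
          linarith [hVspC v hv]
        -- apply induction hypothesis to the image
        have hWsupp : ∀ y, y ∈ Vsp.map ((headCLM N : lp X 1 →L[ℝ] lp X 1) : lp X 1 →ₗ[ℝ] lp X 1) →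
            ∀ n, N ≤ n → (y : ∀ m, X m) n = 0 := by
          intro y hy n hn
          obtain ⟨v, hv, rfl⟩ := Submodule.mem_map.1 hy
          show headCLM N v n = 0
          rw [headCLM_apply]
          simp [Nat.not_lt.2 hn]
        obtain ⟨S, hSmem, cS, hcS, hSbb⟩ :=
          ih (Vsp.map ((headCLM N : lp X 1 →L[ℝ] lp X 1) : lp X 1 →ₗ[ℝ] lp X 1))
            (map_isClosed Vsp hVsp_cl _ (by norm_num) headBB)
            (map_not_finiteDimensional Vsp _ (by norm_num : (0:ℝ) < 1/2) headBB hVsp_fd)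
            hWsupp
        obtain ⟨T, hT, c', hc', hT2⟩ :=
          pullback Vsp _ (by norm_num : (0:ℝ) < 1/2) headBB S hSmem hcS hSbb
        exact ⟨T, fun v => hVsp_le (hT v), c', hc', hT2⟩

end SatHead

end L1Sat

open L1Sat in
/-- A Banach space `Z` (given as a closed subspace) contains an isomorphic copy of ℓ₁
iff there is a bounded-below continuous linear map from ℓ₁ with range inside it. -/
theorem l1sum_of_l1saturated_is_l1saturated
    (X : ℕ → Type*) [∀ n, NormedAddCommGroup (X n)] [∀ n, NormedSpace ℝ (X n)]
    [∀ n, CompleteSpace (X n)]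
    (h : ∀ n, ∀ Z : Submodule ℝ (X n), IsClosed (Z : Set (X n)) →
        ¬ FiniteDimensional ℝ Z →
        ∃ T : lp (fun _ : ℕ => ℝ) 1 →L[ℝ] X n, (∀ v, T v ∈ Z) ∧
          ∃ c : ℝ, 0 < c ∧ ∀ v, c * ‖v‖ ≤ ‖T v‖) :
    ∀ Z : Submodule ℝ (lp X 1), IsClosed (Z : Set (lp X 1)) →
        ¬ FiniteDimensional ℝ Z →
        ∃ T : lp (fun _ : ℕ => ℝ) 1 →L[ℝ] lp X 1, (∀ v, T v ∈ Z) ∧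
          ∃ c : ℝ, 0 < c ∧ ∀ v, c * ‖v‖ ≤ ‖T v‖ := by
  intro Z hZc hZfd
  by_cases hcase : ∃ (NN : ℕ) (c : ℝ), 0 < c ∧ ∀ z ∈ Z, c * ‖z‖ ≤ ‖headCLM NN z‖
  · obtain ⟨NN, c, hc, hbb⟩ := hcase
    have hWsupp : ∀ y, y ∈ Z.map ((headCLM NN : lp X 1 →L[ℝ] lp X 1) : lp X 1 →ₗ[ℝ] lp X 1) →
        ∀ n, NN ≤ n → (y : ∀ m, X m) n = 0 := by
      intro y hy n hn
      obtain ⟨v, hv, rfl⟩ := Submodule.mem_map.1 hy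
      show headCLM NN v n = 0
      rw [headCLM_apply]
      simp [Nat.not_lt.2 hn]
    obtain ⟨S, hSmem, cS, hcS, hSbb⟩ :=
      satHead h NN (Z.map ((headCLM NN : lp X 1 →L[ℝ] lp X 1) : lp X 1 →ₗ[ℝ] lp X 1))
        (map_isClosed Z hZc _ hc hbb)
        (map_not_finiteDimensional Z _ hc hbb hZfd)
        hWsupp
    obtain ⟨T, hT, c', hc', hT2⟩ := pullback Z _ hc hbb S hSmem hcS hSbb
    exact ⟨T, hT, c', hc', hT2⟩
  · push_neg at hcase
    apply caseB Z hZc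
    intro NN
    obtain ⟨z, hzZ, hzlt⟩ := hcase NN (1/8) (by norm_num)
    have hzne : z ≠ 0 := by
      intro h0
      rw [h0] at hzlt
      simp at hzlt
    have hzn : (0:ℝ) < ‖z‖ := norm_pos_iff.2 hzne
    refine ⟨‖z‖⁻¹ • z, Z.smul_mem _ hzZ, ?_, ?_⟩
    · rw [norm_smul, Real.norm_eq_abs, abs_inv, abs_of_pos hzn]
      field_simp
    · rw [← norm_headCLM]
      rw [map_smul]
      rw [norm_smul, Real.norm_eq_abs, abs_inv, abs_of_pos hzn]
      rw [inv_mul_lt_iff₀ hzn]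
      linarith [hzlt]
end
end

section
/- Let X be a Banach space, (x_n*) ⊂ X* a sequence with ∑_n |x_n*(x)| < ∞ for all x ∈ X, and suppose the series ∑ x_n* converges to x* ∈ X* in the weak* topology. Let x** ∈ X** be a weak* limit of a sequence of canonical images of elements of X. Then x**(x*) = ∑_n x**(x_n*). -/
open Filter Topology NormedSpace

set_option maxHeartbeats 1000000

private lemma abs_tsum_le_tsum_abs_aux (f : ℕ → ℝ) (h : Summable fun n => |f n|) :
    |∑' n, f n| ≤ ∑' n, |f n| := by
  have hn : Summable fun n => ‖f n‖ := by simpa only [Real.norm_eq_abs] using h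
  simpa only [Real.norm_eq_abs] using norm_tsum_le_tsum_norm hn

/-- If `∑ xₙ*` is pointwise absolutely convergent and weak* converges to `x*`, then any
`x** ∈ X**` that is a weak* limit of a sequence of canonical images of elements of `X`
satisfies `x**(x*) = ∑ₙ x**(xₙ*)`. -/
theorem baireOne_functional_acts_on_wuc_series
    (X : Type*) [NormedAddCommGroup X] [NormedSpace ℝ X] [CompleteSpace X]
    (xs : ℕ → StrongDual ℝ X) (xstar : StrongDual ℝ X)
    (habs : ∀ x : X, Summable (fun n => |xs n x|))
    (hw : ∀ x : X,
      Tendsto (fun N => ∑ n ∈ Finset.range N, xs n x) atTop (𝓝 (xstar x)))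
    (xss : StrongDual ℝ (StrongDual ℝ X))
    (hB1 : ∃ x : ℕ → X, ∀ f : StrongDual ℝ X,
      Tendsto (fun k => (inclusionInDoubleDual ℝ X (x k)) f) atTop (𝓝 (xss f))) :
    Tendsto (fun N => ∑ n ∈ Finset.range N, xss (xs n)) atTop (𝓝 (xss xstar)) := by
  classical
  obtain ⟨xv, hxv⟩ := hB1
  simp only [NormedSpace.dual_def] at hxv
  have hsum : ∀ x : X, Summable (fun n => xs n x) := fun x => (habs x).of_abs
  have htsum : ∀ x : X, (∑' n, xs n x) = xstar x := fun x =>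
    tendsto_nhds_unique (hsum x).hasSum.tendsto_sum_nat (hw x)
  -- Step 1 : Banach-Steinhaus uniform bound
  obtain ⟨C, hC⟩ : ∃ C : ℝ, ∀ x : X, (∑' n, |xs n x|) ≤ C * ‖x‖ := by
    set gf : Finset ℕ × (ℕ → Bool) → X →L[ℝ] ℝ := fun p =>
      ∑ n ∈ p.1, (if p.2 n then (1 : ℝ) else -1) • xs n with hgf
    have hpt : ∀ x : X, ∃ c : ℝ, ∀ p, ‖gf p x‖ ≤ c := by
      intro x
      refine ⟨∑' n, |xs n x|, fun p => ?_⟩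
      rw [hgf]
      simp only [ContinuousLinearMap.coe_sum', Finset.sum_apply,
        ContinuousLinearMap.coe_smul', Pi.smul_apply, smul_eq_mul]
      calc ‖∑ n ∈ p.1, (if p.2 n then (1 : ℝ) else -1) * xs n x‖
          ≤ ∑ n ∈ p.1, ‖(if p.2 n then (1 : ℝ) else -1) * xs n x‖ := norm_sum_le _ _
        _ ≤ ∑ n ∈ p.1, |xs n x| := by
            refine Finset.sum_le_sum fun n _ => ?_
            rw [Real.norm_eq_abs, abs_mul]
            rcases h : p.2 n <;> simp
        _ ≤ ∑' n, |xs n x| := Summable.sum_le_tsum _ (fun n _ => abs_nonneg _) (habs x)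
    obtain ⟨C, hC⟩ := banach_steinhaus hpt
    refine ⟨C, fun x => ?_⟩
    refine Summable.tsum_le_of_sum_le (habs x) fun F => ?_
    have h1 : ∑ n ∈ F, |xs n x| = gf (F, fun n => decide (0 ≤ xs n x)) x := by
      rw [hgf]
      simp only [ContinuousLinearMap.coe_sum', Finset.sum_apply,
        ContinuousLinearMap.coe_smul', Pi.smul_apply, smul_eq_mul, decide_eq_true_eq]
      refine Finset.sum_congr rfl fun n _ => ?_
      rcases le_or_gt 0 (xs n x) with h | h
      · rw [if_pos h, one_mul, abs_of_nonneg h]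
      · rw [if_neg (not_le.mpr h), abs_of_neg h]; ring
    rw [h1]
    calc gf (F, fun n => decide (0 ≤ xs n x)) x
        ≤ ‖gf (F, fun n => decide (0 ≤ xs n x)) x‖ := le_abs_self _
      _ ≤ ‖gf (F, fun n => decide (0 ≤ xs n x))‖ * ‖x‖ :=
          ContinuousLinearMap.le_opNorm _ _
      _ ≤ C * ‖x‖ := mul_le_mul_of_nonneg_right (hC _) (norm_nonneg _)
  -- Step 2 : bounded multiplier functionals
  have habsb : ∀ (b : ℕ → ℝ), (∀ n, |b n| ≤ 1) → ∀ x : X,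
      Summable (fun n => |b n * xs n x|) := by
    intro b hb x
    refine Summable.of_nonneg_of_le (fun n => abs_nonneg _) (fun n => ?_) (habs x)
    rw [abs_mul]
    calc |b n| * |xs n x| ≤ 1 * |xs n x| :=
          mul_le_mul_of_nonneg_right (hb n) (abs_nonneg _)
      _ = |xs n x| := one_mul _
  have hsb : ∀ (b : ℕ → ℝ), (∀ n, |b n| ≤ 1) → ∀ x : X,
      Summable (fun n => b n * xs n x) := fun b hb x => (habsb b hb x).of_abs
  have hGex : ∀ b : ℕ → ℝ, (∀ n, |b n| ≤ 1) →
      ∃ g : StrongDual ℝ X, ∀ x, g x = ∑' n, b n * xs n x := by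
    intro b hb
    have hadd : ∀ u v : X, (∑' n, b n * xs n (u + v)) =
        (∑' n, b n * xs n u) + ∑' n, b n * xs n v := by
      intro u v
      have h1 : ∀ n, b n * xs n (u + v) = b n * xs n u + b n * xs n v := by
        intro n; rw [map_add]; ring
      rw [tsum_congr h1, Summable.tsum_add (hsb b hb u) (hsb b hb v)]
    have hsmul : ∀ (r : ℝ) (u : X), (∑' n, b n * xs n (r • u)) =
        r * ∑' n, b n * xs n u := by
      intro r u
      have h1 : ∀ n, b n * xs n (r • u) = r * (b n * xs n u) := by
        intro n; rw [map_smul, smul_eq_mul]; ring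
      rw [tsum_congr h1, tsum_mul_left]
    have hbound : ∀ x : X, |∑' n, b n * xs n x| ≤ C * ‖x‖ := by
      intro x
      calc |∑' n, b n * xs n x| ≤ ∑' n, |b n * xs n x| :=
            abs_tsum_le_tsum_abs_aux _ (habsb b hb x)
        _ ≤ ∑' n, |xs n x| := by
            refine Summable.tsum_le_tsum (fun n => ?_) (habsb b hb x) (habs x)
            rw [abs_mul]
            calc |b n| * |xs n x| ≤ 1 * |xs n x| :=
                  mul_le_mul_of_nonneg_right (hb n) (abs_nonneg _)
              _ = |xs n x| := one_mul _
        _ ≤ C * ‖x‖ := hC x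
    refine ⟨LinearMap.mkContinuous
      { toFun := fun x => ∑' n, b n * xs n x
        map_add' := hadd
        map_smul' := by
          intro r u
          simp only [RingHom.id_apply, smul_eq_mul]
          exact hsmul r u } C (fun x => hbound x), fun x => rfl⟩
  -- Step 3 : tail functionals
  set τ : ℕ → StrongDual ℝ X := fun N => xstar - ∑ n ∈ Finset.range N, xs n with hτ
  have hτ_apply0 : ∀ N (x : X), τ N x = xstar x - ∑ n ∈ Finset.range N, xs n x := by
    intro N x
    simp [hτ, ContinuousLinearMap.coe_sum', Finset.sum_apply]
  have hτ_apply : ∀ N (x : X), τ N x = ∑' n, xs (n + N) x := by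
    intro N x
    have h := Summable.sum_add_tsum_nat_add (f := fun n => xs n x) N (hsum x)
    rw [hτ_apply0, ← htsum x]
    linarith
  set t : ℕ → ℝ := fun N => xss (τ N) with ht
  have ht_eq : ∀ N, t N = xss xstar - ∑ n ∈ Finset.range N, xss (xs n) := by
    intro N
    rw [ht]
    simp [hτ, map_sub, map_sum]
  set y : ℕ → ℝ := fun n => xss (xs n) with hy
  have hty : ∀ {N M : ℕ}, N ≤ M → t N - t M = ∑ n ∈ Finset.Ico N M, y n := by
    intro N M hNM
    have h1 : τ N - τ M = ∑ n ∈ Finset.Ico N M, xs n := by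
      rw [hτ, Finset.sum_Ico_eq_sub _ hNM]; exact sub_sub_sub_cancel_left _ _ _
    rw [ht, ← map_sub, h1, map_sum]
  -- Step 4 : reduce goal
  suffices hgoal : Tendsto t atTop (𝓝 0) by
    have h2 := (tendsto_const_nhds (x := xss xstar) (f := (atTop : Filter ℕ))).sub hgoal
    rw [sub_zero] at h2
    refine h2.congr fun N => ?_
    rw [ht_eq]; ring
  by_contra hcon
  rw [Metric.tendsto_atTop] at hcon
  push_neg at hcon
  obtain ⟨ε, hε, hS⟩ := hcon
  simp only [Real.dist_0_eq_abs] at hS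
  set δ : ℝ := ε / 100 with hδdef
  have hδ : 0 < δ := by positivity
  -- limits along the sequence
  have hA : ∀ N, Tendsto (fun k => τ N (xv k)) atTop (𝓝 (t N)) := fun N => hxv (τ N)
  have hyk : ∀ n, Tendsto (fun k => xs n (xv k)) atTop (𝓝 (y n)) := fun n => hxv (xs n)
  -- picking good k's
  have hpickE : ∀ N j : ℕ, ∃ k, j ≤ k ∧ |τ N (xv k) - t N| ≤ δ ∧
      ∑ n ∈ Finset.range N, |xs n (xv k) - y n| ≤ δ := by
    intro N j
    have h1 : Tendsto (fun k => |τ N (xv k) - t N|) atTop (𝓝 0) := by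
      have := ((hA N).sub (tendsto_const_nhds (x := t N))).abs
      simpa using this
    have h2 : Tendsto (fun k => ∑ n ∈ Finset.range N, |xs n (xv k) - y n|) atTop (𝓝 0) := by
      have h3 : Tendsto (fun k => ∑ n ∈ Finset.range N, |xs n (xv k) - y n|) atTop
          (𝓝 (∑ n ∈ Finset.range N, |y n - y n|)) := by
        refine tendsto_finset_sum _ fun n _ => ?_
        exact ((hyk n).sub (tendsto_const_nhds (x := y n))).abs
      simpa using h3
    have e1 := h1.eventually_lt_const hδ
    have e2 := h2.eventually_lt_const hδ
    obtain ⟨k, hk1, hk2, hk3⟩ := ((eventually_ge_atTop j).and (e1.and e2)).exists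
    exact ⟨k, hk1, le_of_lt hk2, le_of_lt hk3⟩
  -- picking next N
  have hstepE : ∀ N k : ℕ, ∃ N', N < N' ∧ ε ≤ |t N'| ∧
      (∑' n, |xs (n + N') (xv k)|) ≤ δ := by
    intro N k
    have htail : Tendsto (fun M => ∑' n, |xs (n + M) (xv k)|) atTop (𝓝 0) :=
      tendsto_sum_nat_add (fun n => |xs n (xv k)|)
    obtain ⟨M0, hM0⟩ := eventually_atTop.mp (htail.eventually_lt_const hδ)
    obtain ⟨N', hN'ge, hN'⟩ := hS (max (N + 1) M0)
    refine ⟨N', ?_, hN', le_of_lt (hM0 N' ?_)⟩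
    · have := le_trans (le_max_left (N + 1) M0) hN'ge
      omega
    · exact le_trans (le_max_right _ _) hN'ge
  choose pick hpick_le hpick_a hpick_b using hpickE
  choose nxt hnxt_lt hnxt_S hnxt_tail using hstepE
  obtain ⟨N₀, -, hN₀⟩ := hS 0
  -- the block construction
  set Nf : ℕ → ℕ := fun j => Nat.rec N₀ (fun j Nj => nxt Nj (pick Nj j)) j with hNf
  set kf : ℕ → ℕ := fun j => pick (Nf j) j with hkf
  have hNf_succ : ∀ j, Nf (j + 1) = nxt (Nf j) (kf j) := fun j => rfl
  have hNf_lt : ∀ j, Nf j < Nf (j + 1) := fun j => hnxt_lt _ _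
  have hNf_mono : StrictMono Nf := strictMono_nat_of_lt_succ hNf_lt
  have hNfS : ∀ j, ε ≤ |t (Nf j)| := by
    intro j
    cases j with
    | zero => exact hN₀
    | succ j => exact hnxt_S _ _
  have htailj : ∀ j, (∑' n, |xs (n + Nf (j + 1)) (xv (kf j))|) ≤ δ := fun j =>
    hnxt_tail _ _
  have hkj : ∀ j, j ≤ kf j := fun j => hpick_le _ _
  have hka : ∀ j, |τ (Nf j) (xv (kf j)) - t (Nf j)| ≤ δ := fun j => hpick_a _ _
  have hkb : ∀ j, ∑ n ∈ Finset.range (Nf j), |xs n (xv (kf j)) - y n| ≤ δ := fun j =>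
    hpick_b _ _
  -- the sign sequence
  set b : ℕ → ℝ := fun n =>
    if Nf 0 ≤ n then (-1 : ℝ) ^ (Nat.findGreatest (fun j => Nf j ≤ n) n) else 0 with hb
  have hb1 : ∀ n, |b n| ≤ 1 := by
    intro n
    by_cases h : Nf 0 ≤ n
    · simp only [hb, if_pos h, abs_pow, abs_neg, abs_one, one_pow, le_refl]
    · simp [hb, h]
  have hbval : ∀ j n, Nf j ≤ n → n < Nf (j + 1) → b n = (-1 : ℝ) ^ j := by
    intro j n hjn hnj
    have h0 : Nf 0 ≤ n := le_trans (hNf_mono.monotone (Nat.zero_le j)) hjn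
    have hjnn : j ≤ n := le_trans hNf_mono.le_apply hjn
    have hfg : Nat.findGreatest (fun j' => Nf j' ≤ n) n = j := by
      refine le_antisymm ?_ (Nat.le_findGreatest hjnn hjn)
      by_contra hlt
      push_neg at hlt
      have hP : Nf (Nat.findGreatest (fun j' => Nf j' ≤ n) n) ≤ n :=
        Nat.findGreatest_spec (P := fun j' => Nf j' ≤ n) (n := n) hjnn hjn
      have : Nf (j + 1) ≤ Nf (Nat.findGreatest (fun j' => Nf j' ≤ n) n) :=
        hNf_mono.monotone hlt
      omega
    simp only [hb]
    rw [if_pos h0, hfg]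
  obtain ⟨g, hg⟩ := hGex b hb1
  set L : ℝ := xss g with hL
  have hkf_tendsto : Tendsto kf atTop atTop := tendsto_atTop_mono hkj tendsto_id
  have hdj : Tendsto (fun j => g (xv (kf j))) atTop (𝓝 L) := (hxv g).comp hkf_tendsto
  set d : ℕ → ℝ := fun j => g (xv (kf j)) with hd
  set c : ℕ → ℝ := fun j => ∑ n ∈ Finset.range (Nf j), b n * y n with hc
  set e : ℕ → ℝ := fun j => d j - c j - (-1 : ℝ) ^ j * t (Nf j) with he
  -- key error estimate
  have hee : ∀ j, |e j| ≤ 4 * δ := by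
    intro j
    set a : ℕ → ℝ := fun n => xs n (xv (kf j)) with ha
    have hsplit := Summable.sum_add_tsum_nat_add (f := fun n => b n * a n) (Nf (j + 1))
      (hsb b hb1 (xv (kf j)))
    -- tail bound
    have habs_shift : Summable (fun n => |a (n + Nf (j + 1))|) :=
      (summable_nat_add_iff (Nf (j + 1))).2 (habs (xv (kf j)))
    have habsba : Summable (fun n => |b (n + Nf (j + 1)) * a (n + Nf (j + 1))|) := by
      refine Summable.of_nonneg_of_le (fun n => abs_nonneg _) (fun n => ?_) habs_shift
      rw [abs_mul]
      calc |b (n + Nf (j+1))| * |a (n + Nf (j+1))| ≤ 1 * |a (n + Nf (j+1))| :=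
            mul_le_mul_of_nonneg_right (hb1 _) (abs_nonneg _)
        _ = |a (n + Nf (j+1))| := one_mul _
    have hT : |∑' n, b (n + Nf (j + 1)) * a (n + Nf (j + 1))| ≤ δ := by
      calc |∑' n, b (n + Nf (j + 1)) * a (n + Nf (j + 1))|
          ≤ ∑' n, |b (n + Nf (j + 1)) * a (n + Nf (j + 1))| :=
            abs_tsum_le_tsum_abs_aux _ habsba
        _ ≤ ∑' n, |a (n + Nf (j + 1))| := by
            refine Summable.tsum_le_tsum (fun n => ?_) habsba habs_shift
            rw [abs_mul]
            calc |b (n + Nf (j+1))| * |a (n + Nf (j+1))| ≤ 1 * |a (n + Nf (j+1))| :=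
                  mul_le_mul_of_nonneg_right (hb1 _) (abs_nonneg _)
              _ = |a (n + Nf (j+1))| := one_mul _
        _ ≤ δ := htailj j
    -- split the finite part
    have hrange : ∑ n ∈ Finset.range (Nf (j + 1)), b n * a n =
        (∑ n ∈ Finset.range (Nf j), b n * a n) +
          ∑ n ∈ Finset.Ico (Nf j) (Nf (j + 1)), b n * a n := by
      exact (Finset.sum_range_add_sum_Ico _ (le_of_lt (hNf_lt j))).symm
    -- middle block
    have hmid : ∑ n ∈ Finset.Ico (Nf j) (Nf (j + 1)), b n * a n =
        (-1 : ℝ) ^ j * (τ (Nf j) (xv (kf j)) - τ (Nf (j + 1)) (xv (kf j))) := by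
      have h1 : ∑ n ∈ Finset.Ico (Nf j) (Nf (j + 1)), b n * a n =
          (-1 : ℝ) ^ j * ∑ n ∈ Finset.Ico (Nf j) (Nf (j + 1)), a n := by
        rw [Finset.mul_sum]
        refine Finset.sum_congr rfl fun n hn => ?_
        rw [Finset.mem_Ico] at hn
        rw [hbval j n hn.1 hn.2]
      have h2 : τ (Nf j) (xv (kf j)) - τ (Nf (j + 1)) (xv (kf j)) =
          ∑ n ∈ Finset.Ico (Nf j) (Nf (j + 1)), a n := by
        rw [hτ_apply0, hτ_apply0, Finset.sum_Ico_eq_sub _ (le_of_lt (hNf_lt j))]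
        rw [ha]; ring_nf
      rw [h1, h2]
    -- second tail bound
    have hτ2 : |τ (Nf (j + 1)) (xv (kf j))| ≤ δ := by
      rw [hτ_apply]
      calc |∑' n, xs (n + Nf (j + 1)) (xv (kf j))|
          ≤ ∑' n, |xs (n + Nf (j + 1)) (xv (kf j))| :=
            abs_tsum_le_tsum_abs_aux _ habs_shift
        _ ≤ δ := htailj j
    -- first part close to c j
    have hAc : |(∑ n ∈ Finset.range (Nf j), b n * a n) - c j| ≤ δ := by
      rw [hc]
      rw [← Finset.sum_sub_distrib]
      calc |∑ n ∈ Finset.range (Nf j), (b n * a n - b n * y n)|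
          ≤ ∑ n ∈ Finset.range (Nf j), |b n * a n - b n * y n| :=
            Finset.abs_sum_le_sum_abs _ _
        _ ≤ ∑ n ∈ Finset.range (Nf j), |a n - y n| := by
            refine Finset.sum_le_sum fun n _ => ?_
            rw [← mul_sub, abs_mul]
            calc |b n| * |a n - y n| ≤ 1 * |a n - y n| :=
                  mul_le_mul_of_nonneg_right (hb1 n) (abs_nonneg _)
              _ = |a n - y n| := one_mul _
        _ ≤ δ := hkb j
    -- combine
    have hdval : d j = (∑ n ∈ Finset.range (Nf j), b n * a n) +
        (-1 : ℝ) ^ j * (τ (Nf j) (xv (kf j)) - τ (Nf (j + 1)) (xv (kf j))) +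
        ∑' n, b (n + Nf (j + 1)) * a (n + Nf (j + 1)) := by
      have hga : g (xv (kf j)) = ∑' n, b n * a n := hg (xv (kf j))
      simp only [hd]
      rw [hga, ← hsplit, hrange, hmid]
    have hmt : |(-1 : ℝ) ^ j * (τ (Nf j) (xv (kf j)) - τ (Nf (j + 1)) (xv (kf j))) -
        (-1 : ℝ) ^ j * t (Nf j)| ≤ 2 * δ := by
      rw [← mul_sub, abs_mul, abs_pow, abs_neg, abs_one, one_pow, one_mul]
      have h3 : τ (Nf j) (xv (kf j)) - τ (Nf (j + 1)) (xv (kf j)) - t (Nf j) =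
          (τ (Nf j) (xv (kf j)) - t (Nf j)) + (-(τ (Nf (j + 1)) (xv (kf j)))) := by ring
      rw [h3]
      calc |(τ (Nf j) (xv (kf j)) - t (Nf j)) + (-(τ (Nf (j + 1)) (xv (kf j))))|
          ≤ |τ (Nf j) (xv (kf j)) - t (Nf j)| + |τ (Nf (j + 1)) (xv (kf j))| := by
            refine le_trans (abs_add_le _ _) ?_
            rw [abs_neg]
        _ ≤ δ + δ := add_le_add (hka j) hτ2
        _ = 2 * δ := by ring
    have heval : e j = ((∑ n ∈ Finset.range (Nf j), b n * a n) - c j) +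
        ((-1 : ℝ) ^ j * (τ (Nf j) (xv (kf j)) - τ (Nf (j + 1)) (xv (kf j))) -
          (-1 : ℝ) ^ j * t (Nf j)) +
        ∑' n, b (n + Nf (j + 1)) * a (n + Nf (j + 1)) := by
      simp only [he]
      rw [hdval]; ring
    rw [heval]
    calc |_ + _ + _| ≤ |_ + _| + |∑' n, b (n + Nf (j + 1)) * a (n + Nf (j + 1))| :=
          abs_add_le _ _
      _ ≤ (|(∑ n ∈ Finset.range (Nf j), b n * a n) - c j| +
            |(-1 : ℝ) ^ j * (τ (Nf j) (xv (kf j)) - τ (Nf (j + 1)) (xv (kf j))) -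
              (-1 : ℝ) ^ j * t (Nf j)|) +
            |∑' n, b (n + Nf (j + 1)) * a (n + Nf (j + 1))| :=
          add_le_add_left (abs_add_le _ _) _
      _ ≤ (δ + 2 * δ) + δ := add_le_add (add_le_add hAc hmt) hT
      _ = 4 * δ := by ring
  -- recursion for c
  have hcrec : ∀ j, c (j + 1) - c j = (-1 : ℝ) ^ j * (t (Nf j) - t (Nf (j + 1))) := by
    intro j
    have h1 : c (j + 1) - c j = ∑ n ∈ Finset.Ico (Nf j) (Nf (j + 1)), b n * y n := by
      have h0 := Finset.sum_range_add_sum_Ico (fun n => b n * y n)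
        (le_of_lt (hNf_lt j))
      rw [hc]
      simp only at h0 ⊢
      linarith
    rw [h1, hty (le_of_lt (hNf_lt j)), Finset.mul_sum]
    refine Finset.sum_congr rfl fun n hn => ?_
    rw [Finset.mem_Ico] at hn
    rw [hbval j n hn.1 hn.2]
  -- gap estimate
  have hgap : ∀ j, 2 * ε - 8 * δ ≤ |d (j + 1) - d j| := by
    intro j
    have h1 : d (j + 1) - d j =
        (-2) * ((-1 : ℝ) ^ j * t (Nf (j + 1))) + (e (j + 1) - e j) := by
      have hdj0 : d j = c j + (-1 : ℝ) ^ j * t (Nf j) + e j := by rw [he]; ring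
      have hdj1 : d (j + 1) = c (j + 1) + (-1 : ℝ) ^ (j + 1) * t (Nf (j + 1)) + e (j + 1) := by
        rw [he]; ring
      have hpow : (-1 : ℝ) ^ (j + 1) = -((-1 : ℝ) ^ j) := by
        rw [pow_succ]; ring
      rw [hdj0, hdj1, hpow]
      have := hcrec j
      linarith [hcrec j]
    rw [h1]
    have h2 : 2 * ε ≤ |(-2) * ((-1 : ℝ) ^ j * t (Nf (j + 1)))| := by
      have e2 : |(-2 : ℝ)| = 2 := by norm_num
      rw [abs_mul, e2, abs_mul, abs_pow, abs_neg, abs_one, one_pow, one_mul]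
      have := hNfS (j + 1)
      linarith
    have h3 : |e (j + 1) - e j| ≤ 8 * δ := by
      calc |e (j + 1) - e j| ≤ |e (j + 1)| + |e j| := abs_sub _ _
        _ ≤ 4 * δ + 4 * δ := add_le_add (hee (j + 1)) (hee j)
        _ = 8 * δ := by ring
    have h4 : |(-2) * ((-1 : ℝ) ^ j * t (Nf (j + 1)))| - |e (j + 1) - e j| ≤
        |(-2) * ((-1 : ℝ) ^ j * t (Nf (j + 1))) + (e (j + 1) - e j)| := by
      have h5 := abs_add_le ((-2) * ((-1 : ℝ) ^ j * t (Nf (j + 1))) + (e (j + 1) - e j))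
        (-(e (j + 1) - e j))
      simp only [add_neg_cancel_right, abs_neg] at h5
      linarith
    linarith
  -- contradiction with convergence
  have hpos : 0 < ε - 4 * δ := by rw [hδdef]; linarith
  rw [Metric.tendsto_atTop] at hdj
  obtain ⟨J, hJ⟩ := hdj (ε - 4 * δ) hpos
  have hJ1 := hJ J (le_refl J)
  have hJ2 := hJ (J + 1) (Nat.le_succ J)
  rw [Real.dist_eq] at hJ1 hJ2
  have hgapJ := hgap J
  have : |d (J + 1) - d J| ≤ |d (J + 1) - L| + |d J - L| := by
    have h6 := abs_add_le (d (J + 1) - L) (L - d J)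
    have h7 : d (J + 1) - L + (L - d J) = d (J + 1) - d J := by ring
    rw [h7] at h6
    have h8 : |L - d J| = |d J - L| := abs_sub_comm _ _
    linarith [h6, h8.le]
  have hger : |d (J+1) - d J| < 2 * ε - 8 * δ := by
    calc |d (J + 1) - d J| ≤ |d (J + 1) - L| + |d J - L| := this
      _ < (ε - 4 * δ) + (ε - 4 * δ) := add_lt_add hJ2 hJ1
      _ = 2 * ε - 8 * δ := by ring
  linarith
end

section
/- Let X = (⊕ X_n)_{ℓ1} be the ℓ1-direct sum of Banach spaces X_n with projections π_n, and let y** ∈ X** satisfy: y**(x*) = ∑_n y**(π_n* x*) for all x* ∈ X*. Then ∑_n ‖π_n** y**‖ ≤ ‖y**‖ + 1 is finite, and the series ∑_n π_n** y** converges absolutely in X** to y**. -/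
open Filter Topology NormedSpace

set_option maxHeartbeats 1000000

/-- In `X = (⊕ Xₙ)_{ℓ₁}`, if `y** ∈ X**` satisfies `y**(x*) = ∑ₙ y**(πₙ* x*)` for all
`x* ∈ X*`, then `∑ₙ ‖πₙ** y**‖ ≤ ‖y**‖ + 1` and `∑ₙ πₙ** y**` converges absolutely
(in norm) to `y**`. -/
theorem bidual_functional_decomposition_l1sum
    (X : ℕ → Type*) [∀ n, NormedAddCommGroup (X n)] [∀ n, NormedSpace ℝ (X n)]
    [∀ n, CompleteSpace (X n)]
    (π : ℕ → lp X 1 →L[ℝ] lp X 1)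
    (hπ : ∀ (n : ℕ) (f : lp X 1) (m : ℕ),
      (π n f : ∀ m, X m) m = if m = n then (f : ∀ m, X m) m else 0)
    (ystar : StrongDual ℝ (StrongDual ℝ (lp X 1)))
    (hy : ∀ xstar : StrongDual ℝ (lp X 1),
      HasSum (fun n => ystar (xstar.comp (π n))) (ystar xstar)) :
    Summable (fun n =>
        ‖ystar.comp ((ContinuousLinearMap.compL ℝ (lp X 1) (lp X 1) ℝ).flip (π n))‖) ∧
      (∑' n, ‖ystar.comp
          ((ContinuousLinearMap.compL ℝ (lp X 1) (lp X 1) ℝ).flip (π n))‖)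
        ≤ ‖ystar‖ + 1 ∧
      HasSum (fun n =>
          ystar.comp ((ContinuousLinearMap.compL ℝ (lp X 1) (lp X 1) ℝ).flip (π n)))
        ystar := by
  classical
  set T : ℕ → StrongDual ℝ (StrongDual ℝ (lp X 1)) :=
    fun n => ystar.comp ((ContinuousLinearMap.compL ℝ (lp X 1) (lp X 1) ℝ).flip (π n))
    with hT
  have hTapp : ∀ (n : ℕ) (x : StrongDual ℝ (lp X 1)), T n x = ystar (x.comp (π n)) :=
    fun n x => rfl
  -- the norm of a coordinate projection applied to f
  have hnorm : ∀ (n : ℕ) (f : lp X 1), ‖π n f‖ = ‖(f : ∀ m, X m) n‖ := by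
    intro n f
    have h1 : (0:ℝ) < (1 : ENNReal).toReal := by norm_num
    rw [lp.norm_eq_tsum_rpow h1]
    have h2 : (∑' (i : ℕ), ‖(π n f : ∀ m, X m) i‖ ^ (1 : ENNReal).toReal)
        = ‖(f : ∀ m, X m) n‖ := by
      rw [tsum_eq_single n]
      · simp [hπ]
      · intro m hm; simp [hπ, hm]
    rw [h2]
    simp
  have hcoord : ∀ (f : lp X 1) (s : Finset ℕ),
      ∑ n ∈ s, ‖(f : ∀ m, X m) n‖ ≤ ‖f‖ := by
    intro f s
    have := lp.sum_rpow_le_norm_rpow (p := 1) (by norm_num) f s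
    simpa using this
  -- composition of projections
  have hcomp : ∀ n m : ℕ, (π n).comp (π m) = if n = m then π n else 0 := by
    intro n m
    by_cases h : n = m
    · subst h
      rw [if_pos rfl]
      ext f k
      simp only [ContinuousLinearMap.comp_apply]
      rw [hπ n ((π n) f) k]
      by_cases h1 : k = n
      · rw [if_pos h1, h1]
      · rw [if_neg h1, hπ n f k, if_neg h1]
    · rw [if_neg h]
      ext f k
      simp only [ContinuousLinearMap.comp_apply, ContinuousLinearMap.zero_apply,
        lp.coeFn_zero, Pi.zero_apply]
      rw [hπ, hπ]
      split_ifs with h1 h2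
      · exact absurd (h1 ▸ h2 : n = m) h
      · rfl
      · rfl
  -- choice of almost norming functionals
  have hchoice : ∀ n : ℕ, ∃ u : StrongDual ℝ (lp X 1), ‖u‖ ≤ 1 ∧ u.comp (π n) = u ∧
      ‖T n‖ - (1/2 : ℝ)^(n+1) ≤ T n u := by
    intro n
    by_cases h : ‖T n‖ - (1/2 : ℝ)^(n+1) ≤ 0
    · exact ⟨0, by simp, by simp, by simpa using h⟩
    · push_neg at h
      have hr : ‖T n‖ - (1/2 : ℝ)^(n+1) < ‖T n‖ := by
        have : (0:ℝ) < (1/2 : ℝ)^(n+1) := by positivity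
        linarith
      obtain ⟨x, hx1, hx2⟩ := (T n).exists_lt_apply_of_lt_opNorm hr
      -- pick the right sign
      obtain ⟨y, hy1, hy2⟩ : ∃ y : StrongDual ℝ (lp X 1), ‖y‖ ≤ 1 ∧
          ‖T n‖ - (1/2 : ℝ)^(n+1) ≤ T n y := by
        rcases le_or_gt 0 (T n x) with hs | hs
        · refine ⟨x, hx1.le, ?_⟩
          rw [Real.norm_eq_abs, abs_of_nonneg hs] at hx2
          exact hx2.le
        · refine ⟨-x, by simpa using hx1.le, ?_⟩
          rw [Real.norm_eq_abs, abs_of_neg hs] at hx2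
          simpa using hx2.le
      refine ⟨y.comp (π n), ?_, ?_, ?_⟩
      · have hπn : ‖π n‖ ≤ 1 := by
          apply ContinuousLinearMap.opNorm_le_bound _ zero_le_one
          intro f
          rw [hnorm, one_mul]
          simpa using hcoord f {n}
        calc ‖y.comp (π n)‖ ≤ ‖y‖ * ‖π n‖ := ContinuousLinearMap.opNorm_comp_le _ _
          _ ≤ 1 * 1 := mul_le_mul hy1 hπn (norm_nonneg _) zero_le_one
          _ = 1 := one_mul 1
      · rw [ContinuousLinearMap.comp_assoc, hcomp n n, if_pos rfl]
      · have : T n (y.comp (π n)) = T n y := by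
          rw [hTapp, hTapp, ContinuousLinearMap.comp_assoc, hcomp n n, if_pos rfl]
        rw [this]; exact hy2
  choose u hu1 hu2 hu3 using hchoice
  -- geometric bound
  have hgeom : ∀ s : Finset ℕ, ∑ n ∈ s, (1/2 : ℝ)^(n+1) ≤ 1 := by
    intro s
    have hsumm : Summable (fun n : ℕ => (1/2 : ℝ)^(n+1)) := by
      simpa [pow_succ] using summable_geometric_two.mul_right (1/2 : ℝ)
    have h1 : ∑ n ∈ s, (1/2 : ℝ)^(n+1) ≤ ∑' n : ℕ, (1/2 : ℝ)^(n+1) :=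
      Summable.sum_le_tsum s (fun n _ => by positivity) hsumm
    have h2 : ∑' n : ℕ, (1/2 : ℝ)^(n+1) = 1 := by
      have : ∑' n : ℕ, (1/2 : ℝ)^n * (1/2 : ℝ) = 2 * (1/2 : ℝ) := by
        rw [tsum_mul_right, tsum_geometric_two]
      calc ∑' n : ℕ, (1/2 : ℝ)^(n+1) = ∑' n : ℕ, (1/2 : ℝ)^n * (1/2 : ℝ) := by
            simp [pow_succ]
        _ = 2 * (1/2 : ℝ) := this
        _ = 1 := by norm_num
    rw [h2] at h1; exact h1
  -- key uniform bound on partial sums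
  have key : ∀ s : Finset ℕ, ∑ n ∈ s, ‖T n‖ ≤ ‖ystar‖ + 1 := by
    intro s
    set v : StrongDual ℝ (lp X 1) := ∑ n ∈ s, u n with hv
    have hv1 : ‖v‖ ≤ 1 := by
      apply ContinuousLinearMap.opNorm_le_bound _ zero_le_one
      intro f
      rw [one_mul]
      calc ‖v f‖ = ‖∑ n ∈ s, u n f‖ := by
            rw [hv]; simp
        _ ≤ ∑ n ∈ s, ‖u n f‖ := norm_sum_le _ _
        _ ≤ ∑ n ∈ s, ‖(f : ∀ m, X m) n‖ := by
            apply Finset.sum_le_sum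
            intro n _
            have h1 : u n f = u n (π n f) := by
              conv_lhs => rw [← hu2 n]
              rfl
            rw [h1]
            calc ‖u n (π n f)‖ ≤ ‖u n‖ * ‖π n f‖ := (u n).le_opNorm _
              _ ≤ 1 * ‖(f : ∀ m, X m) n‖ := by
                  rw [hnorm]
                  exact mul_le_mul_of_nonneg_right (hu1 n) (norm_nonneg _)
              _ = ‖(f : ∀ m, X m) n‖ := one_mul _
        _ ≤ ‖f‖ := hcoord f s
    have hvcomp : ∀ m : ℕ, v.comp (π m) = if m ∈ s then u m else 0 := by
      intro m
      have h1 : v.comp (π m) = ∑ n ∈ s, (u n).comp (π m) :=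
        ContinuousLinearMap.finset_sum_comp _ _
      have h2 : ∀ n ∈ s, (u n).comp (π m) = if n = m then u n else 0 := by
        intro n _
        rw [← hu2 n, ContinuousLinearMap.comp_assoc, hcomp n m]
        split_ifs with h
        · rw [hu2 n]
        · simp
      rw [h1, Finset.sum_congr rfl h2, Finset.sum_ite_eq' s m u]
    have hfin : HasSum (fun n => ystar (v.comp (π n)))
        (∑ n ∈ s, ystar (v.comp (π n))) := by
      apply hasSum_sum_of_ne_finset_zero
      intro n hn
      rw [hvcomp n, if_neg hn]
      simp
    have hvs : ystar v = ∑ n ∈ s, ystar (v.comp (π n)) := (hy v).unique hfin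
    have hterm : ∀ n ∈ s, ystar (v.comp (π n)) = T n (u n) := by
      intro n hn
      rw [hvcomp n, if_pos hn, hTapp, hu2 n]
    calc ∑ n ∈ s, ‖T n‖ ≤ ∑ n ∈ s, (T n (u n) + (1/2 : ℝ)^(n+1)) := by
          apply Finset.sum_le_sum
          intro n _
          linarith [hu3 n]
      _ = (∑ n ∈ s, T n (u n)) + ∑ n ∈ s, (1/2 : ℝ)^(n+1) := Finset.sum_add_distrib
      _ ≤ ystar v + 1 := by
          apply add_le_add _ (hgeom s)
          rw [hvs, Finset.sum_congr rfl hterm]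
      _ ≤ ‖ystar‖ + 1 := by
          have h1 : ystar v ≤ ‖ystar v‖ := le_abs_self _
          have h2 : ‖ystar v‖ ≤ ‖ystar‖ * ‖v‖ := ystar.le_opNorm v
          have h3 : ‖ystar‖ * ‖v‖ ≤ ‖ystar‖ * 1 :=
            mul_le_mul_of_nonneg_left hv1 (norm_nonneg ystar)
          linarith
  have hsummable : Summable (fun n => ‖T n‖) :=
    summable_of_sum_le (fun n => norm_nonneg (T n)) key
  refine ⟨hsummable, Summable.tsum_le_of_sum_le hsummable key, ?_⟩
  have hTsum : Summable T := Summable.of_norm (f := T) hsummable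
  obtain ⟨S, hS⟩ := hTsum
  have hSy : S = ystar := by
    ext x
    have h1 : HasSum (fun n => (ContinuousLinearMap.apply ℝ ℝ x) (T n))
        ((ContinuousLinearMap.apply ℝ ℝ x) S) :=
      (ContinuousLinearMap.apply ℝ ℝ x).hasSum hS
    simp only [ContinuousLinearMap.apply_apply] at h1
    have h2 : HasSum (fun n => T n x) (ystar x) := by
      simpa [hTapp] using hy x
    exact h1.unique h2
  rw [← hSy]
  exact hS
end

section
/- Let X be a Banach space, K ⊂ B_{X*} a weak* compact set that is c-norming for X (i.e. ‖x‖ ≤ c·sup_{s∈K}|s(x)| for all x ∈ X). If x** ∈ X** is the weak* limit of a sequence (ι(x_n)) of canonical images of elements of X, then ‖x**‖ ≤ c·sup_{s∈K}|x**(s)|. -/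
open Filter Topology NormedSpace

open Set in
private lemma simons_core {X : Type*} [NormedAddCommGroup X] [NormedSpace ℝ X] [CompleteSpace X]
    (Φ : X → ℝ) (x : ℕ → X) (R Cl D : ℝ) (hCl : 0 ≤ Cl)
    (hRx : ∀ n, ‖x n‖ ≤ R)
    (hΦ1 : ∀ y, ‖y‖ ≤ Φ y)
    (hΦ2 : ∀ u v, Φ u ≤ Φ v + Cl * ‖u - v‖)
    (hatt : ∀ y : X, ∃ g : StrongDual ℝ X, (∀ u, g u ≤ Φ u) ∧ g y = Φ y ∧
      ∃ L, L ≤ D ∧ Tendsto (fun n => g (x n)) atTop (𝓝 L))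
    (f : StrongDual ℝ X) (hf : ‖f‖ ≤ 1) (l : ℝ) (hl : ∀ n, l ≤ f (x n))
    (ε : ℝ) (hε : 0 < ε) : l ≤ D + ε := by
  classical
  -- the convex hulls of tails
  set C : ℕ → Set X := fun n => convexHull ℝ (x '' Set.Ici n) with hC
  have hCconv : ∀ n, Convex ℝ (C n) := fun n => convex_convexHull ℝ _
  have hxC : ∀ n, x n ∈ C n := fun n =>
    subset_convexHull ℝ _ (mem_image_of_mem x self_mem_Ici)
  have hCmono : ∀ {n m : ℕ}, n ≤ m → C m ⊆ C n := fun {n m} h =>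
    convexHull_mono (image_mono (Ici_subset_Ici.2 h))
  have hΦ0 : ∀ y, 0 ≤ Φ y := fun y => (norm_nonneg y).trans (hΦ1 y)
  have hR0 : 0 ≤ R := (norm_nonneg (x 0)).trans (hRx 0)
  have hCR : ∀ n, ∀ y ∈ C n, ‖y‖ ≤ R := by
    intro n y hy
    have : C n ⊆ Metric.closedBall (0 : X) R := by
      apply convexHull_min _ (convex_closedBall _ _)
      rintro _ ⟨k, -, rfl⟩
      simpa [mem_closedBall_zero_iff] using hRx k
    simpa [mem_closedBall_zero_iff] using this hy
  -- linear upper bounds pass to hulls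
  have hull_bound : ∀ (n : ℕ) (g : StrongDual ℝ X) (a : ℝ),
      (∀ k, n ≤ k → g (x k) ≤ a) → ∀ y ∈ C n, g y ≤ a := by
    intro n g a hk y hy
    have hlin : IsLinearMap ℝ g := ⟨map_add g, map_smul g⟩
    have : C n ⊆ {y : X | g y ≤ a} := by
      apply convexHull_min _ (convex_halfSpace_le hlin a)
      rintro _ ⟨k, hkn, rfl⟩
      exact hk k hkn
    exact this hy
  have hull_lb : ∀ (n : ℕ) (y : X), y ∈ C n → l ≤ f y := by
    intro n y hy
    have := hull_bound n (-f) (-l) (fun k _ => by simpa using neg_le_neg (hl k)) y hy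
    simpa using this
  -- coefficients
  set q : ℕ → ℝ := fun j => ((1:ℝ)/2)^(j+1) with hqdef
  have hq0 : ∀ j, 0 ≤ q j := fun j => by positivity
  have hq_sum : HasSum q 1 := by
    have h := hasSum_geometric_of_lt_one (r := (1:ℝ)/2) (by norm_num) (by norm_num)
    have h2 := h.mul_left ((1:ℝ)/2)
    norm_num at h2
    exact h2.congr_fun fun j => by simp [hqdef, pow_succ, mul_comm]
  have hqgeom : ∀ (v : ℕ → X), (∀ k, ‖v k‖ ≤ R) → ∀ n, Summable (fun j => q j • v (n + j)) := by
    intro v hv n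
    apply Summable.of_norm_bounded (g := fun j => q j * R)
    · exact (hq_sum.summable.mul_right R)
    · intro j
      rw [norm_smul, Real.norm_eq_abs, abs_of_nonneg (hq0 j)]
      exact mul_le_mul_of_nonneg_left (hv _) (hq0 j)
  -- the greedy choice
  have hpick : ∀ (n : ℕ) (F : X), ∃ v, v ∈ C n ∧
      Φ (F + ((1:ℝ)/2)^n • v) ≤
        sInf ((fun v => Φ (F + ((1:ℝ)/2)^n • v)) '' C n) + ε/4 * ((1:ℝ)/4)^n := by
    intro n F
    obtain ⟨a, ⟨v, hvC, rfl⟩, ha⟩ := Real.lt_sInf_add_pos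
      (s := (fun v => Φ (F + ((1:ℝ)/2)^n • v)) '' C n)
      ⟨_, mem_image_of_mem _ (hxC n)⟩ (show (0:ℝ) < ε/4 * ((1:ℝ)/4)^n by positivity)
    exact ⟨v, hvC, ha.le⟩
  choose pick hpickC hpickΦ using hpick
  -- the partial sums F_n and the chosen vectors w_n
  set P : ℕ → X := fun n => Nat.rec (0 : X) (fun m Pm => Pm + q m • pick m Pm) n with hPdef
  set w : ℕ → X := fun n => pick n (P n) with hwdef
  have hP0 : P 0 = 0 := rfl
  have hPsucc : ∀ n, P (n+1) = P n + q n • w n := fun n => rfl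
  have hwC : ∀ n, w n ∈ C n := fun n => hpickC n (P n)
  have hwR : ∀ n, ‖w n‖ ≤ R := fun n => hCR n _ (hwC n)
  have hSw : ∀ n, Summable (fun j => q j • w (n + j)) := hqgeom w hwR
  -- the tails
  set t : ℕ → X := fun n => ∑' j, q j • w (n + j) with htdef
  have htrec : ∀ n, t n = ((1:ℝ)/2) • w n + ((1:ℝ)/2) • t (n+1) := by
    intro n
    have h1 := Summable.tsum_eq_zero_add (hSw n)
    have h2 : ∀ j : ℕ, q (j+1) • w (n + (j+1)) = ((1:ℝ)/2) • (q j • w ((n+1) + j)) := by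
      intro j
      have : n + (j+1) = (n+1) + j := by omega
      rw [this, smul_smul]
      congr 1
      simp [hqdef, pow_succ]
      ring
    simp only [htdef]
    rw [h1]
    simp only [h2]
    rw [Summable.tsum_const_smul ((1:ℝ)/2) (hSw (n+1))]
    norm_num [hqdef]
  have hPt : ∀ n, P n + ((1:ℝ)/2)^n • t n = t 0 := by
    intro n
    induction n with
    | zero => simp [hP0]
    | succ n ih =>
      rw [hPsucc n, ← ih, htrec n]
      have hq' : q n = ((1:ℝ)/2)^n * ((1:ℝ)/2) := by rw [hqdef]; ring
      rw [hq', pow_succ]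
      module
  -- Φ is continuous
  have hΦcont : Continuous Φ := by
    have : LipschitzWith (Real.toNNReal Cl) Φ := by
      apply LipschitzWith.of_dist_le_mul
      intro u v
      rw [Real.dist_eq, dist_eq_norm, Real.coe_toNNReal _ hCl]
      rw [abs_le]
      constructor
      · have h3 := hΦ2 v u
        have h4 : ‖v - u‖ = ‖u - v‖ := norm_sub_rev v u
        rw [h4] at h3
        linarith
      · have := hΦ2 u v
        linarith
    exact this.continuous
  -- tails lie in the closure of the convex hulls
  have htC : ∀ n, t n ∈ closure (C n) := by
    intro n
    have ha : ∀ m : ℕ, ∑ j ∈ Finset.range m, q j = 1 - ((1:ℝ)/2)^m := by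
      intro m
      induction m with
      | zero => simp
      | succ m ih => rw [Finset.sum_range_succ, ih, hqdef]; ring
    set u : ℕ → X := fun m => (1 - ((1:ℝ)/2)^m)⁻¹ • ∑ j ∈ Finset.range m, q j • w (n + j)
      with hudef
    have hmem : ∀ m : ℕ, 1 ≤ m → u m ∈ C n := by
      intro m hm
      have hpos : (0:ℝ) < 1 - ((1:ℝ)/2)^m := by
        have : ((1:ℝ)/2)^m < 1 := pow_lt_one₀ (by norm_num) (by norm_num) (by omega)
        linarith
      have : u m = ∑ j ∈ Finset.range m, ((1 - ((1:ℝ)/2)^m)⁻¹ * q j) • w (n + j) := by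
        simp only [hudef]
        rw [Finset.smul_sum]
        simp [smul_smul]
      rw [this]
      apply (hCconv n).sum_mem
      · intro j _
        positivity
      · rw [← Finset.mul_sum, ha m, inv_mul_cancel₀ hpos.ne']
      · intro j _
        exact hCmono (Nat.le_add_right n j) (hwC (n + j))
    have hlim : Tendsto u atTop (𝓝 (t n)) := by
      have h1 : Tendsto (fun m => ∑ j ∈ Finset.range m, q j • w (n + j)) atTop (𝓝 (t n)) :=
        (hSw n).hasSum.tendsto_sum_nat
      have h2 : Tendsto (fun m : ℕ => (1 - ((1:ℝ)/2)^m)⁻¹) atTop (𝓝 1) := by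
        have h3 : Tendsto (fun m : ℕ => 1 - ((1:ℝ)/2)^m) atTop (𝓝 1) := by
          have := tendsto_pow_atTop_nhds_zero_of_lt_one
            (show (0:ℝ) ≤ 1/2 by norm_num) (show (1:ℝ)/2 < 1 by norm_num)
          simpa using (tendsto_const_nhds (x := (1:ℝ))).sub this
        simpa using h3.inv₀ (by norm_num)
      have h4 : Tendsto (fun m : ℕ => (1 - ((1:ℝ)/2)^m)⁻¹ • ∑ j ∈ Finset.range m, q j • w (n + j))
          atTop (𝓝 ((1:ℝ) • t n)) := h2.smul h1
      rw [one_smul] at h4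
      exact h4
    exact mem_closure_of_tendsto hlim (eventually_atTop.2 ⟨1, hmem⟩)
  -- the infimum is at most Φ (t 0)
  have key : ∀ n, Φ (P n + ((1:ℝ)/2)^n • w n) ≤ Φ (t 0) + ε/4 * ((1:ℝ)/4)^n := by
    intro n
    refine (hpickΦ n (P n)).trans (add_le_add_left ?_ _)
    have hG : Continuous (fun v : X => Φ (P n + ((1:ℝ)/2)^n • v)) := by
      apply hΦcont.comp
      exact continuous_const.add (continuous_const.smul continuous_id)
    obtain ⟨us, husC, husl⟩ := mem_closure_iff_seq_limit.1 (htC n)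
    have hbdd : BddBelow ((fun v => Φ (P n + ((1:ℝ)/2)^n • v)) '' C n) :=
      ⟨0, by rintro _ ⟨v, -, rfl⟩; exact hΦ0 _⟩
    have h1 : Tendsto (fun i => Φ (P n + ((1:ℝ)/2)^n • us i)) atTop
        (𝓝 (Φ (P n + ((1:ℝ)/2)^n • t n))) := (hG.tendsto _).comp husl
    have h2 : sInf ((fun v => Φ (P n + ((1:ℝ)/2)^n • v)) '' C n)
        ≤ Φ (P n + ((1:ℝ)/2)^n • t n) :=
      ge_of_tendsto' h1 fun i => csInf_le hbdd (mem_image_of_mem _ (husC i))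
    rw [hPt n] at h2
    exact h2
  -- get the attaining functional at t 0
  obtain ⟨g, hgΦ, hgt0, L, hLD, hgL⟩ := hatt (t 0)
  -- evaluation of g on tails
  have hgt : ∀ n, g (t n) = ∑' j, q j * g (w (n + j)) := by
    intro n
    have := g.map_tsum (hSw n)
    simpa [smul_eq_mul] using this
  -- step estimate : g (w n) ≤ g (t n) + ε/4 * (1/2)^n
  have hgw : ∀ n, g (w n) ≤ g (t n) + ε/4 * ((1:ℝ)/2)^n := by
    intro n
    have h2p : (0:ℝ) < ((1:ℝ)/2)^n := by positivity
    have h1 : g (P n) + ((1:ℝ)/2)^n * g (w n) ≤ Φ (t 0) + ε/4 * ((1:ℝ)/4)^n := by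
      have := (key n)
      have h2 : g (P n + ((1:ℝ)/2)^n • w n) = g (P n) + ((1:ℝ)/2)^n * g (w n) := by
        simp [smul_eq_mul]
      linarith [hgΦ (P n + ((1:ℝ)/2)^n • w n), h2 ▸ hgΦ (P n + ((1:ℝ)/2)^n • w n)]
    have h3 : Φ (t 0) = g (P n) + ((1:ℝ)/2)^n * g (t n) := by
      rw [← hgt0, ← hPt n]
      simp [smul_eq_mul]
    rw [h3] at h1
    have h4 : ((1:ℝ)/2)^n * g (w n) ≤ ((1:ℝ)/2)^n * g (t n) + ε/4 * ((1:ℝ)/4)^n := by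
      linarith
    have h5 : ε/4 * ((1:ℝ)/4)^n = ((1:ℝ)/2)^n * (ε/4 * ((1:ℝ)/2)^n) := by
      rw [show ((1:ℝ)/4) = ((1:ℝ)/2) * ((1:ℝ)/2) by norm_num, mul_pow]
      ring
    rw [h5, ← mul_add] at h4
    exact le_of_mul_le_mul_left h4 h2p
  -- telescoping estimate
  have htel : ∀ m, g (t 0) ≤ g (t m) + ε/2 * (1 - ((1:ℝ)/2)^m) := by
    intro m
    induction m with
    | zero => simp
    | succ m ih =>
      have hrec : g (t m) = (1/2) * g (w m) + (1/2) * g (t (m+1)) := by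
        rw [htrec m]
        simp [smul_eq_mul]
      have := hgw m
      have hp : ((1:ℝ)/2)^(m+1) = ((1:ℝ)/2)^m * (1/2) := pow_succ _ _
      rw [hp]
      nlinarith [pow_pos (show (0:ℝ) < 1/2 by norm_num) m]
  have htel' : ∀ m, g (t 0) ≤ g (t m) + ε/2 := by
    intro m
    have h1 : ε/2 * (1 - ((1:ℝ)/2)^m) ≤ ε/2 := by
      have : (0:ℝ) < ((1:ℝ)/2)^m := by positivity
      nlinarith
    linarith [htel m]
  -- g (t 0) ≤ L + ε/2
  have hgL2 : g (t 0) ≤ L + ε/2 := by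
    refine le_of_forall_pos_le_add ?_
    intro δ hδ
    obtain ⟨m, hm⟩ := (eventually_atTop.1 (hgL.eventually (eventually_le_nhds (by linarith : L < L + δ))))
    have hbound : ∀ j : ℕ, g (w (m + j)) ≤ L + δ := by
      intro j
      exact hull_bound m g (L + δ) (fun k hk => hm k hk) _ (hCmono (Nat.le_add_right m j) (hwC (m + j)))
    have hsum1 : HasSum (fun j => q j * g (w (m + j))) (g (t m)) := by
      have h := (hSw m).hasSum.mapL g
      have h2 : (fun j => g (q j • w (m + j))) = fun j => q j * g (w (m + j)) := by
        funext j; simp [smul_eq_mul]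
      rw [h2] at h
      exact h
    have hsum2 : HasSum (fun j => q j * (L + δ)) (L + δ) := by
      have h := hq_sum.mul_right (L + δ)
      rwa [one_mul] at h
    have h5 := hasSum_le (fun j => mul_le_mul_of_nonneg_left (hbound j) (hq0 j)) hsum1 hsum2
    linarith [htel' m]
  -- conclusion
  have hsumf : HasSum (fun j => q j * f (w (0 + j))) (f (t 0)) := by
    have h := (hSw 0).hasSum.mapL f
    have h2 : (fun j => f (q j • w (0 + j))) = fun j => q j * f (w (0 + j)) := by
      funext j; simp [smul_eq_mul]
    rw [h2] at h
    exact h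
  have hsuml : HasSum (fun j => q j * l) l := by
    have h := hq_sum.mul_right l
    rwa [one_mul] at h
  have hlf : l ≤ f (t 0) :=
    hasSum_le (fun j => mul_le_mul_of_nonneg_left (hull_lb _ _ (hwC (0 + j))) (hq0 j)) hsuml hsumf
  have hft : f (t 0) ≤ Φ (t 0) := by
    calc f (t 0) ≤ |f (t 0)| := le_abs_self _
    _ = ‖f (t 0)‖ := (Real.norm_eq_abs _).symm
    _ ≤ ‖f‖ * ‖t 0‖ := f.le_opNorm _
    _ ≤ 1 * ‖t 0‖ := mul_le_mul_of_nonneg_right hf (norm_nonneg _)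
    _ = ‖t 0‖ := one_mul _
    _ ≤ Φ (t 0) := hΦ1 _
  linarith [hlf, hft, hgL2, hLD, hgt0]


/-- If `K ⊆ B_{X*}` is weak* compact and `c`-norming for `X`, then any weak* limit
`x**` of a sequence of canonical images of elements of `X` satisfies
`‖x**‖ ≤ c ⨆_{s ∈ K} |x**(s)|`. -/
theorem norming_set_norms_baireOne
    (X : Type*) [NormedAddCommGroup X] [NormedSpace ℝ X] [CompleteSpace X]
    (K : Set (StrongDual ℝ X)) (hK : K ⊆ Metric.closedBall 0 1)
    (hcomp : IsCompact ((fun f => StrongDual.toWeakDual f) '' K))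
    (c : ℝ) (hc : 1 ≤ c)
    (hnorming : ∀ x : X, ‖x‖ ≤ c * ⨆ s : K, |(s : StrongDual ℝ X) x|)
    (xss : StrongDual ℝ (StrongDual ℝ X))
    (hB1 : ∃ x : ℕ → X, ∀ f : StrongDual ℝ X,
      Tendsto (fun n => (inclusionInDoubleDual ℝ X (x n)) f) atTop (𝓝 (xss f))) :
    ‖xss‖ ≤ c * ⨆ s : K, |xss (s : StrongDual ℝ X)| := by
  obtain ⟨x, hx⟩ := hB1
  simp only [dual_def] at hx
  rcases K.eq_empty_or_nonempty with hKe | hKne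
  · -- K empty : X is trivial
    haveI : IsEmpty ↥K := Set.isEmpty_coe_sort.2 hKe
    have h0 : ∀ y : X, y = 0 := by
      intro y
      have h := hnorming y
      rw [Real.iSup_of_isEmpty, mul_zero] at h
      exact norm_le_zero_iff.1 h
    have hxss : ∀ f : StrongDual ℝ X, xss f = 0 := by
      intro f
      refine tendsto_nhds_unique (hx f) ?_
      have : (fun n => f (x n)) = fun _ => (0 : ℝ) := by
        funext n; rw [h0 (x n)]; simp
      rw [this]
      exact tendsto_const_nhds
    rw [Real.iSup_of_isEmpty, mul_zero]
    exact ContinuousLinearMap.opNorm_le_bound _ le_rfl fun f => by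
      simp [hxss f]
  · haveI : Nonempty ↥K := hKne.to_subtype
    have hc0 : (0:ℝ) < c := lt_of_lt_of_le one_pos hc
    have hKnorm : ∀ s ∈ K, ‖s‖ ≤ 1 := fun s hs => by
      have := hK hs
      rwa [Metric.mem_closedBall, dist_zero_right] at this
    have hbdd : ∀ y : X, BddAbove (Set.range fun s : K => |(s : StrongDual ℝ X) y|) := by
      intro y
      refine ⟨‖y‖, ?_⟩
      rintro _ ⟨s, rfl⟩
      calc |(s : StrongDual ℝ X) y| = ‖(s : StrongDual ℝ X) y‖ := (Real.norm_eq_abs _).symm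
        _ ≤ ‖(s : StrongDual ℝ X)‖ * ‖y‖ := ContinuousLinearMap.le_opNorm _ _
        _ ≤ 1 * ‖y‖ := mul_le_mul_of_nonneg_right (hKnorm s s.2) (norm_nonneg _)
        _ = ‖y‖ := one_mul _
    have hbdd2 : BddAbove (Set.range fun s : K => |xss (s : StrongDual ℝ X)|) := by
      refine ⟨‖xss‖, ?_⟩
      rintro _ ⟨s, rfl⟩
      calc |xss (s : StrongDual ℝ X)| = ‖xss (s : StrongDual ℝ X)‖ := (Real.norm_eq_abs _).symm
        _ ≤ ‖xss‖ * ‖(s : StrongDual ℝ X)‖ := ContinuousLinearMap.le_opNorm _ _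
        _ ≤ ‖xss‖ * 1 := mul_le_mul_of_nonneg_left (hKnorm s s.2) (norm_nonneg xss)
        _ = ‖xss‖ := mul_one _
    set M := ⨆ s : K, |xss (s : StrongDual ℝ X)| with hMdef
    have hM0 : 0 ≤ M := Real.iSup_nonneg fun s => abs_nonneg _
    have hMb : ∀ s ∈ K, |xss s| ≤ M := fun s hs => le_ciSup hbdd2 ⟨s, hs⟩
    set Φ : X → ℝ := fun y => c * ⨆ s : K, |(s : StrongDual ℝ X) y| with hΦdef
    have hle_sup : ∀ (y : X) (s : StrongDual ℝ X), s ∈ K →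
        |s y| ≤ ⨆ s : K, |(s : StrongDual ℝ X) y| :=
      fun y s hs => le_ciSup (hbdd y) ⟨s, hs⟩
    have hsup_le : ∀ (y : X) (a : ℝ), (∀ s ∈ K, |(s : StrongDual ℝ X) y| ≤ a) →
        (⨆ s : K, |(s : StrongDual ℝ X) y|) ≤ a :=
      fun y a h => ciSup_le fun s => h s s.2
    have hΦ1 : ∀ y, ‖y‖ ≤ Φ y := hnorming
    have hΦ2 : ∀ u v, Φ u ≤ Φ v + c * ‖u - v‖ := by
      intro u v
      have h1 : (⨆ s : K, |(s : StrongDual ℝ X) u|) ≤ (⨆ s : K, |(s : StrongDual ℝ X) v|) + ‖u - v‖ := by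
        apply hsup_le
        intro s hs
        have h2 : s u = s v + s (u - v) := by rw [map_sub]; ring
        have h3 : |s u| ≤ |s v| + |s (u - v)| := by rw [h2]; exact abs_add_le _ _
        refine h3.trans (add_le_add (hle_sup v s hs) ?_)
        calc |s (u - v)| = ‖s (u - v)‖ := (Real.norm_eq_abs _).symm
          _ ≤ ‖s‖ * ‖u - v‖ := ContinuousLinearMap.le_opNorm _ _
          _ ≤ 1 * ‖u - v‖ := mul_le_mul_of_nonneg_right (hKnorm s hs) (norm_nonneg _)
          _ = ‖u - v‖ := one_mul _
      calc Φ u ≤ c * ((⨆ s : K, |(s : StrongDual ℝ X) v|) + ‖u - v‖) :=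
            mul_le_mul_of_nonneg_left h1 hc0.le
        _ = Φ v + c * ‖u - v‖ := by rw [hΦdef]; ring
    have hatt0 : ∀ y : X, ∃ s₀ ∈ K, ∀ s ∈ K, |s y| ≤ |(s₀ : StrongDual ℝ X) y| := by
      intro y
      have hne : ((fun f : StrongDual ℝ X => StrongDual.toWeakDual f) '' K).Nonempty :=
        hKne.image _
      have hcont : ContinuousOn (fun ψ : WeakDual ℝ X => |ψ y|)
          ((fun f : StrongDual ℝ X => StrongDual.toWeakDual f) '' K) :=
        ((WeakDual.eval_continuous y).abs).continuousOn
      obtain ⟨ψ₀, hmem, hmax⟩ := hcomp.exists_isMaxOn hne hcont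
      obtain ⟨s₀, hs₀, rfl⟩ := hmem
      exact ⟨s₀, hs₀, fun s hs => hmax (Set.mem_image_of_mem _ hs)⟩
    -- uniform bound on the sequence
    have hxb : ∀ g : StrongDual ℝ X, ∃ Cg, ∀ n, ‖(inclusionInDoubleDual ℝ X (x n)) g‖ ≤ Cg := by
      intro g
      obtain ⟨Cg, hCg⟩ := ((hx g).abs).bddAbove_range
      exact ⟨Cg, fun n => by
        simpa [Real.norm_eq_abs] using hCg (Set.mem_range_self n)⟩
    obtain ⟨R, hR⟩ := banach_steinhaus hxb
    have hRx : ∀ n, ‖x n‖ ≤ R := by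
      intro n
      calc ‖x n‖ = ‖(inclusionInDoubleDualLi ℝ : X →ₗᵢ[ℝ] _) (x n)‖ :=
            ((inclusionInDoubleDualLi ℝ).norm_map (x n)).symm
        _ = ‖inclusionInDoubleDual ℝ X (x n)‖ := rfl
        _ ≤ R := hR n
    -- the main estimate on the unit ball
    have main : ∀ f : StrongDual ℝ X, ‖f‖ ≤ 1 → xss f ≤ c * M := by
      intro f hf
      refine le_of_forall_pos_le_add ?_
      intro ε hε
      have hev : ∀ᶠ n in atTop, xss f - ε/2 ≤ f (x n) :=
        (hx f).eventually (eventually_ge_nhds (by linarith))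
      obtain ⟨N, hN⟩ := eventually_atTop.1 hev
      set x' : ℕ → X := fun k => x (k + N) with hx'def
      have hx' : ∀ g : StrongDual ℝ X, Tendsto (fun n => g (x' n)) atTop (𝓝 (xss g)) :=
        fun g => (hx g).comp (tendsto_add_atTop_nat N)
      have hatt : ∀ y : X, ∃ g : StrongDual ℝ X, (∀ u, g u ≤ Φ u) ∧ g y = Φ y ∧
          ∃ L, L ≤ c * M ∧ Tendsto (fun n => g (x' n)) atTop (𝓝 L) := by
        intro y
        obtain ⟨s₀, hs₀K, hmax⟩ := hatt0 y
        set e : ℝ := if 0 ≤ (s₀ : StrongDual ℝ X) y then 1 else -1 with hedef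
        have he_pm : e = 1 ∨ e = -1 := by
          rw [hedef]; split_ifs <;> simp
        have he_mul : ∀ a : ℝ, e * a ≤ |a| := by
          intro a
          rcases he_pm with h | h <;> rw [h]
          · rw [one_mul]; exact le_abs_self a
          · rw [neg_one_mul]; exact neg_le_abs a
        have he_y : e * s₀ y = |s₀ y| := by
          rw [hedef]
          split_ifs with h
          · rw [one_mul, abs_of_nonneg h]
          · rw [abs_of_neg (lt_of_not_ge h)]; ring
        refine ⟨(e * c) • (s₀ : StrongDual ℝ X), ?_, ?_, (e * c) * xss s₀, ?_, ?_⟩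
        · intro u
          have h1 : ((e * c) • (s₀ : StrongDual ℝ X)) u = c * (e * s₀ u) := by
            simp [smul_eq_mul]; ring
          rw [h1]
          calc c * (e * s₀ u) ≤ c * |s₀ u| :=
                mul_le_mul_of_nonneg_left (he_mul _) hc0.le
            _ ≤ Φ u := mul_le_mul_of_nonneg_left (hle_sup u s₀ hs₀K) hc0.le
        · have hsup_eq : (⨆ s : K, |(s : StrongDual ℝ X) y|) = |s₀ y| :=
            le_antisymm (hsup_le y _ fun s hs => hmax s hs) (hle_sup y s₀ hs₀K)
          have h1 : ((e * c) • (s₀ : StrongDual ℝ X)) y = c * (e * s₀ y) := by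
            simp [smul_eq_mul]; ring
          rw [h1, he_y]
          show c * |s₀ y| = c * ⨆ s : K, |(s : StrongDual ℝ X) y|
          rw [hsup_eq]
        · calc (e * c) * xss s₀ = c * (e * xss s₀) := by ring
            _ ≤ c * |xss s₀| := mul_le_mul_of_nonneg_left (he_mul _) hc0.le
            _ ≤ c * M := mul_le_mul_of_nonneg_left (hMb s₀ hs₀K) hc0.le
        · have h1 := Filter.Tendsto.const_mul (e * c) (hx' s₀)
          have h2 : (fun n => (e * c) * s₀ (x' n)) =
              fun n => ((e * c) • (s₀ : StrongDual ℝ X)) (x' n) := by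
            funext n; simp [smul_eq_mul]
          rwa [h2] at h1
      have hcore := simons_core Φ x' R c (c * M) hc0.le (fun n => hRx (n + N)) hΦ1 hΦ2 hatt
        f hf (xss f - ε/2) (fun n => hN (n + N) (Nat.le_add_left N n)) (ε/2) (by linarith)
      linarith
    -- wrap up
    have habs : ∀ f : StrongDual ℝ X, ‖f‖ ≤ 1 → |xss f| ≤ c * M := by
      intro f hf
      have h1 := main f hf
      have h2 := main (-f) (by rwa [norm_neg])
      have h2' : -xss f ≤ c * M := by rwa [map_neg] at h2
      exact abs_le.2 ⟨by linarith, h1⟩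
    refine ContinuousLinearMap.opNorm_le_bound _ (mul_nonneg hc0.le hM0) fun f => ?_
    rcases eq_or_ne f 0 with rfl | hf0
    · simp [mul_nonneg hc0.le hM0]
    · have hfpos : 0 < ‖f‖ := norm_pos_iff.2 hf0
      have hu : ‖(‖f‖⁻¹ • f : StrongDual ℝ X)‖ ≤ 1 := by
        rw [norm_smul, norm_inv, norm_norm, inv_mul_cancel₀ hfpos.ne']
      have h3 := habs _ hu
      rw [map_smul, smul_eq_mul, abs_mul, abs_inv, abs_norm] at h3
      rw [Real.norm_eq_abs]
      calc |xss f| = ‖f‖ * (‖f‖⁻¹ * |xss f|) := by field_simp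
        _ ≤ ‖f‖ * (c * M) := mul_le_mul_of_nonneg_left h3 hfpos.le
        _ = c * M * ‖f‖ := by ring
end

section
/- Let X be a Banach space, K ⊂ B_{X*} weak* compact and c-norming for X, and suppose x**, x_n** ∈ X** (n ∈ ℕ) are all weak* limits of sequences of canonical images of elements of X. If (x_n**) is bounded and x_n**(s) → x**(s) for every s ∈ K, then x_n** → x** in the weak* topology of X** (i.e. x_n**(x*) → x**(x*) for every x* ∈ X*). -/
open Filter Topology NormedSpace

open MeasureTheory Set in
private lemma sum_clamp_aux (m : ℕ) (t : ℝ) (h0 : 0 ≤ t) (h1 : t ≤ m) :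
    ∑ k ∈ Finset.range m, max 0 (min (t - k) 1) = t := by
  induction m with
  | zero => simpa using le_antisymm h0 (by exact_mod_cast h1)
  | succ n ih =>
    rw [Finset.sum_range_succ]
    rcases le_or_gt t n with h | h
    · rw [ih h, max_eq_left ((min_le_left _ _).trans (by linarith)), add_zero]
    · have hterm : ∀ k ∈ Finset.range n, max 0 (min (t - (k : ℝ)) 1) = 1 := by
        intro k hk
        have hk' : (k : ℝ) + 1 ≤ (n : ℝ) := by
          have := Finset.mem_range.mp hk
          exact_mod_cast Nat.succ_le_of_lt this
        rw [min_eq_right (by linarith), max_eq_right zero_le_one]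
      rw [Finset.sum_congr rfl hterm, Finset.sum_const, Finset.card_range, nsmul_eq_mul, mul_one]
      have h1' : t - (n : ℝ) ≤ 1 := by
        push_cast at h1; linarith
      rw [min_eq_left h1', max_eq_right (by linarith)]
      ring

set_option maxHeartbeats 1000000 in
open MeasureTheory Set TopologicalSpace NNReal ENNReal in
/-- Riesz–Markov–Kakutani representation for a positive linear functional on `C(T, ℝ)`,
`T` compact Hausdorff. -/
private theorem riesz_rep {T : Type*} [TopologicalSpace T] [CompactSpace T] [T2Space T]
    [MeasurableSpace T] [BorelSpace T]
    (P : C(T, ℝ) →ₗ[ℝ] ℝ) (hP : ∀ u : C(T, ℝ), (∀ x, 0 ≤ u x) → 0 ≤ P u) :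
    ∃ μ : Measure T, IsFiniteMeasure μ ∧ ∀ u : C(T, ℝ), ∫ x, u x ∂μ = P u := by
  classical
  have Pmono : ∀ u w : C(T, ℝ), (∀ x, u x ≤ w x) → P u ≤ P w := by
    intro u w h
    have h0 : (0 : ℝ) ≤ P (w - u) := hP _ fun x => by
      simpa using sub_nonneg.mpr (h x)
    have h1 : P (w - u) = P w - P u := map_sub P w u
    linarith
  set A : Set T → Set C(T, ℝ) := fun F => {u | (∀ x, 0 ≤ u x) ∧ ∀ x ∈ F, 1 ≤ u x} with hA
  set SS : Set T → Set ℝ := fun F => P '' A F with hSS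
  have hSne : ∀ F, (SS F).Nonempty := fun F =>
    ⟨P 1, 1, ⟨fun x => zero_le_one, fun x _ => by simp⟩, rfl⟩
  have hSbdd : ∀ F, BddBelow (SS F) := by
    intro F
    refine ⟨0, ?_⟩
    rintro y ⟨u, hu, rfl⟩
    exact hP u hu.1
  have hSpos : ∀ F, 0 ≤ sInf (SS F) := by
    intro F
    apply Real.sInf_nonneg
    rintro y ⟨u, hu, rfl⟩
    exact hP u hu.1
  set lam : Compacts T → ℝ≥0 := fun F => Real.toNNReal (sInf (SS (F : Set T))) with hlam
  have lamcoe : ∀ F : Compacts T, (lam F : ℝ) = sInf (SS (F : Set T)) := fun F =>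
    Real.coe_toNNReal _ (hSpos _)
  have hmono : ∀ K₁ K₂ : Compacts T, (K₁ : Set T) ⊆ K₂ → lam K₁ ≤ lam K₂ := by
    intro K₁ K₂ h
    apply Real.toNNReal_mono
    apply csInf_le_csInf (hSbdd _) (hSne _)
    rintro y ⟨u, hu, rfl⟩
    exact ⟨u, ⟨hu.1, fun x hx => hu.2 x (h hx)⟩, rfl⟩
  have happrox : ∀ (F : Set T) (ε : ℝ), 0 < ε → ∃ u ∈ A F, P u < sInf (SS F) + ε := by
    intro F ε hε
    obtain ⟨y, hy, hlt⟩ := Real.lt_sInf_add_pos (hSne F) hε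
    obtain ⟨u, hu, rfl⟩ := hy
    exact ⟨u, hu, hlt⟩
  have hsuple : ∀ K₁ K₂ : Compacts T, lam (K₁ ⊔ K₂) ≤ lam K₁ + lam K₂ := by
    intro K₁ K₂
    have key : sInf (SS ((K₁ ⊔ K₂ : Compacts T) : Set T)) ≤ sInf (SS K₁) + sInf (SS K₂) := by
      refine le_of_forall_pos_le_add ?_
      intro ε hε
      obtain ⟨u₁, hu₁, hP₁⟩ := happrox K₁ (ε / 2) (by linarith)
      obtain ⟨u₂, hu₂, hP₂⟩ := happrox K₂ (ε / 2) (by linarith)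
      have hadm : u₁ + u₂ ∈ A ((K₁ ⊔ K₂ : Compacts T) : Set T) := by
        constructor
        · intro x
          have := hu₁.1 x; have := hu₂.1 x
          simp only [ContinuousMap.add_apply]
          linarith
        · intro x hx
          rw [Compacts.coe_sup] at hx
          have h1 := hu₁.1 x; have h2 := hu₂.1 x
          simp only [ContinuousMap.add_apply]
          rcases hx with hx | hx
          · have := hu₁.2 x hx; linarith
          · have := hu₂.2 x hx; linarith
      have hle : sInf (SS ((K₁ ⊔ K₂ : Compacts T) : Set T)) ≤ P (u₁ + u₂) :=
        csInf_le (hSbdd _) ⟨_, hadm, rfl⟩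
      have hPa : P (u₁ + u₂) = P u₁ + P u₂ := map_add P u₁ u₂
      linarith
    have : (lam (K₁ ⊔ K₂) : ℝ) ≤ ((lam K₁ + lam K₂ : ℝ≥0) : ℝ) := by
      rw [lamcoe, NNReal.coe_add, lamcoe, lamcoe]
      exact key
    exact_mod_cast this
  have hdisj : ∀ K₁ K₂ : Compacts T, Disjoint (K₁ : Set T) (K₂ : Set T) →
      lam (K₁ ⊔ K₂) = lam K₁ + lam K₂ := by
    intro K₁ K₂ hd
    refine le_antisymm (hsuple K₁ K₂) ?_
    obtain ⟨g, hg0, hg1, hg01⟩ := exists_continuous_zero_one_of_isCompact K₁.2 K₂.2.isClosed hd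
    have key : sInf (SS (K₁ : Set T)) + sInf (SS (K₂ : Set T)) ≤
        sInf (SS ((K₁ ⊔ K₂ : Compacts T) : Set T)) := by
      apply le_csInf (hSne _)
      rintro y ⟨u, hu, rfl⟩
      have h₁ : u * (1 - g) ∈ A (K₁ : Set T) := by
        constructor
        · intro x
          have := (hg01 x).2; have := hu.1 x
          simp only [ContinuousMap.mul_apply, ContinuousMap.sub_apply, ContinuousMap.one_apply]
          nlinarith
        · intro x hx
          have hgx : g x = 0 := hg0 hx
          have hux : 1 ≤ u x := hu.2 x (by rw [Compacts.coe_sup]; exact Or.inl hx)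
          simp only [ContinuousMap.mul_apply, ContinuousMap.sub_apply, ContinuousMap.one_apply,
            hgx]
          linarith
      have h₂ : u * g ∈ A (K₂ : Set T) := by
        constructor
        · intro x
          have := (hg01 x).1; have := hu.1 x
          simp only [ContinuousMap.mul_apply]
          nlinarith
        · intro x hx
          have hgx : g x = 1 := hg1 hx
          have hux : 1 ≤ u x := hu.2 x (by rw [Compacts.coe_sup]; exact Or.inr hx)
          simp only [ContinuousMap.mul_apply, hgx]
          linarith
      have i₁ : sInf (SS (K₁ : Set T)) ≤ P (u * (1 - g)) := csInf_le (hSbdd _) ⟨_, h₁, rfl⟩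
      have i₂ : sInf (SS (K₂ : Set T)) ≤ P (u * g) := csInf_le (hSbdd _) ⟨_, h₂, rfl⟩
      have e : P (u * (1 - g)) + P (u * g) = P u := by
        rw [← map_add]
        congr 1
        ext x
        simp only [ContinuousMap.add_apply, ContinuousMap.mul_apply, ContinuousMap.sub_apply,
          ContinuousMap.one_apply]
        ring
      linarith
    have : ((lam K₁ + lam K₂ : ℝ≥0) : ℝ) ≤ (lam (K₁ ⊔ K₂) : ℝ) := by
      rw [NNReal.coe_add, lamcoe, lamcoe, lamcoe]
      exact key
    exact_mod_cast this
  set μc : Content T := ⟨lam, hmono, fun K₁ K₂ h _ _ => hdisj K₁ K₂ h, hsuple⟩ with hμc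
  set μ : Measure T := μc.measure with hμ
  have happly : ∀ F : Compacts T, μc F = (lam F : ℝ≥0∞) := fun F => rfl
  have hopen : ∀ (U : Set T) (hU : IsOpen U), μ U = μc.innerContent ⟨U, hU⟩ := by
    intro U hU
    rw [hμ, Content.measure_apply _ hU.measurableSet]
    exact μc.outerMeasure_opens ⟨U, hU⟩
  have hKO : ∀ (F : Compacts T) (U : Set T) (hU : IsOpen U), (F : Set T) ⊆ U →
      (lam F : ℝ≥0∞) ≤ μ U := by
    intro F U hU hsub
    rw [hopen U hU]
    exact μc.le_innerContent F ⟨U, hU⟩ hsub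
  have huniv : μ univ = (lam ⟨univ, isCompact_univ⟩ : ℝ≥0∞) := by
    refine le_antisymm ?_ (hKO _ _ isOpen_univ (subset_univ _))
    rw [hopen univ isOpen_univ]
    exact μc.innerContent_le ⟨univ, isOpen_univ⟩ ⟨univ, isCompact_univ⟩ subset_rfl
  haveI hfin : IsFiniteMeasure μ := ⟨by rw [huniv]; exact ENNReal.coe_lt_top⟩
  set M : ℝ := (μ univ).toReal with hM
  have hM0 : 0 ≤ M := ENNReal.toReal_nonneg
  have hP1 : P 1 = M := by
    have h1 : P 1 ≤ sInf (SS (univ : Set T)) := by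
      apply le_csInf (hSne _)
      rintro y ⟨u, hu, rfl⟩
      exact Pmono _ _ fun x => by simpa using hu.2 x (mem_univ x)
    have h2 : sInf (SS (univ : Set T)) ≤ P 1 :=
      csInf_le (hSbdd _) ⟨1, ⟨fun x => zero_le_one, fun x _ => by simp⟩, rfl⟩
    have h3 : M = (lam ⟨univ, isCompact_univ⟩ : ℝ) := by
      rw [hM, huniv, ENNReal.coe_toReal]
    rw [h3, lamcoe]
    exact le_antisymm h1 h2
  have intg : ∀ u : C(T, ℝ), Integrable u μ := by
    intro u
    refine ⟨u.continuous.aestronglyMeasurable, ?_⟩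
    exact HasFiniteIntegral.of_bounded (C := ‖u‖)
      (Eventually.of_forall fun x => u.norm_coe_le_norm x)
  have hB3 : ∀ (v : C(T, ℝ)) (F : Compacts T), (∀ x, 0 ≤ v x) → (∀ x, v x ≤ 1) →
      (∀ x, v x ≠ 0 → x ∈ (F : Set T)) → P v ≤ sInf (SS (F : Set T)) := by
    intro v F hv0 hv1 hsupp
    apply le_csInf (hSne _)
    rintro y ⟨u, hu, rfl⟩
    apply Pmono
    intro x
    by_cases hx : v x = 0
    · rw [hx]; exact hu.1 x
    · exact (hv1 x).trans (hu.2 x (hsupp x hx))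
  have I2 : ∀ u : C(T, ℝ), (∀ x, 0 ≤ u x) → (∀ x, u x ≤ 1) → P u ≤ ∫ x, u x ∂μ := by
    intro u hu0 hu1
    have main : ∀ m : ℕ, (m : ℝ) * P u ≤ 2 * M + m * ∫ x, u x ∂μ := by
      intro m
      set v : ℕ → C(T, ℝ) := fun k =>
        ⟨fun x => max 0 (min ((m : ℝ) * u x - k) 1),
          continuous_const.max
            (((continuous_const.mul u.continuous).sub continuous_const).min continuous_const)⟩
        with hv
      have hv0 : ∀ k x, 0 ≤ v k x := fun k x => le_max_left _ _
      have hv1 : ∀ k x, v k x ≤ 1 := fun k x => max_le zero_le_one (min_le_right _ _)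
      have hvsum : ∀ x, ∑ k ∈ Finset.range m, v k x = (m : ℝ) * u x := by
        intro x
        have h1 : (0 : ℝ) ≤ (m : ℝ) * u x := mul_nonneg (Nat.cast_nonneg m) (hu0 x)
        have h2 : (m : ℝ) * u x ≤ (m : ℝ) := by
          nlinarith [hu1 x, Nat.cast_nonneg (α := ℝ) m]
        simpa [hv] using sum_clamp_aux m ((m : ℝ) * u x) h1 h2
      have hPsum : ∑ k ∈ Finset.range m, P (v k) = (m : ℝ) * P u := by
        rw [← _root_.map_sum]
        have hs : (∑ k ∈ Finset.range m, v k) = (m : ℝ) • u := by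
          ext x
          rw [ContinuousMap.sum_apply]
          simpa using hvsum x
        rw [hs, _root_.map_smul, smul_eq_mul]
      have hIsum : ∑ k ∈ Finset.range m, ∫ x, v k x ∂μ = (m : ℝ) * ∫ x, u x ∂μ := by
        rw [← integral_finset_sum _ fun k _ => intg (v k)]
        have : ∀ x, (∑ k ∈ Finset.range m, v k x) = (m : ℝ) * u x := hvsum
        calc ∫ x, ∑ k ∈ Finset.range m, v k x ∂μ = ∫ x, (m : ℝ) * u x ∂μ := by
              apply integral_congr_ae
              exact Eventually.of_forall this
          _ = (m : ℝ) * ∫ x, u x ∂μ := integral_const_mul _ _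
      have hCclosed : ∀ j : ℕ, IsClosed {x : T | (j : ℝ) ≤ (m : ℝ) * u x} := fun j =>
        isClosed_le continuous_const (continuous_const.mul u.continuous)
      have hOopen : ∀ r : ℝ, IsOpen {x : T | r < (m : ℝ) * u x} := fun r =>
        isOpen_lt continuous_const (continuous_const.mul u.continuous)
      set Cs : ℕ → Compacts T := fun j =>
        ⟨{x : T | (j : ℝ) ≤ (m : ℝ) * u x}, (hCclosed j).isCompact⟩ with hCs
      have hint0 : ∀ k, 0 ≤ ∫ x, v k x ∂μ := fun k => integral_nonneg fun x => hv0 k x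
      have boundM : ∀ k, P (v k) ≤ M := fun k =>
        le_of_le_of_eq (Pmono _ 1 fun x => by simpa using hv1 k x) hP1
      have bound_shift : ∀ j : ℕ, P (v (j + 2)) ≤ ∫ x, v j x ∂μ := by
        intro j
        have h1 : P (v (j + 2)) ≤ sInf (SS (Cs (j + 2) : Set T)) := by
          apply hB3 _ _ (hv0 _) (hv1 _)
          intro x hx
          by_contra hmem
          apply hx
          simp only [hCs, Compacts.coe_mk, mem_setOf_eq, not_le] at hmem
          have hle : min ((m : ℝ) * u x - ((j : ℕ) + 2 : ℕ)) 1 ≤ 0 :=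
            (min_le_left _ _).trans (by push_cast at hmem ⊢; linarith)
          simp only [hv, ContinuousMap.coe_mk]
          exact max_eq_left hle
        have h2 : (lam (Cs (j + 2)) : ℝ≥0∞) ≤ μ {x : T | ((j : ℝ) + 1) < (m : ℝ) * u x} := by
          apply hKO _ _ (hOopen _)
          intro x hx
          simp only [hCs, Compacts.coe_mk, mem_setOf_eq] at hx ⊢
          push_cast at hx
          linarith
        have h3 : μ {x : T | ((j : ℝ) + 1) < (m : ℝ) * u x} ≤ μ (Cs (j + 1) : Set T) := by
          apply measure_mono
          intro x hx
          simp only [mem_setOf_eq] at hx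
          simp only [hCs, Compacts.coe_mk, mem_setOf_eq]
          push_cast
          linarith
        have h4 : (μ (Cs (j + 1) : Set T)).toReal ≤ ∫ x, v j x ∂μ := by
          have hind : ∀ x, Set.indicator (Cs (j + 1) : Set T) (fun _ => (1 : ℝ)) x ≤ v j x := by
            intro x
            by_cases hx : x ∈ (Cs (j + 1) : Set T)
            · rw [Set.indicator_of_mem hx]
              have hx' : ((j : ℝ) + 1) ≤ (m : ℝ) * u x := by
                simpa [hCs, Nat.cast_add] using hx
              have hmin : (1 : ℝ) ≤ min ((m : ℝ) * u x - j) 1 := le_min (by linarith) le_rfl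
              calc (1 : ℝ) ≤ min ((m : ℝ) * u x - j) 1 := hmin
                _ ≤ max 0 (min ((m : ℝ) * u x - j) 1) := le_max_right _ _
                _ = v j x := rfl
            · rw [Set.indicator_of_notMem hx]
              exact hv0 j x
          have hms : MeasurableSet (Cs (j + 1) : Set T) := (hCclosed (j + 1)).measurableSet
          have hieq : ∫ x, Set.indicator (Cs (j + 1) : Set T) (fun _ => (1 : ℝ)) x ∂μ
              = (μ (Cs (j + 1) : Set T)).toReal := by
            rw [integral_indicator_const (1 : ℝ) hms]
            simp [Measure.real]
          rw [← hieq]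
          exact integral_mono
            ((integrable_const (1 : ℝ)).indicator hms)
            (intg (v j)) hind
        calc P (v (j + 2)) ≤ sInf (SS (Cs (j + 2) : Set T)) := h1
          _ = (lam (Cs (j + 2)) : ℝ) := (lamcoe _).symm
          _ = ((lam (Cs (j + 2)) : ℝ≥0∞)).toReal := by simp
          _ ≤ (μ (Cs (j + 1) : Set T)).toReal :=
              ENNReal.toReal_mono (measure_ne_top μ _) (h2.trans h3)
          _ ≤ ∫ x, v j x ∂μ := h4
      have key : ∑ k ∈ Finset.range m, P (v k) ≤
          2 * M + ∑ k ∈ Finset.range m, ∫ x, v k x ∂μ := by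
        have e1 : ∑ k ∈ Finset.range (m + 2), P (v k) =
            (∑ k ∈ Finset.range m, P (v (k + 1 + 1))) + P (v (0 + 1)) + P (v 0) := by
          rw [Finset.sum_range_succ' (fun k => P (v k)) (m + 1),
            Finset.sum_range_succ' (fun i => P (v (i + 1))) m]
        have e2 : ∑ k ∈ Finset.range m, P (v k) ≤ ∑ k ∈ Finset.range (m + 2), P (v k) :=
          Finset.sum_le_sum_of_subset_of_nonneg
            (Finset.range_subset_range.mpr (by omega)) fun i _ _ => hP _ (hv0 i)
        have t1 : ∑ k ∈ Finset.range m, P (v (k + 1 + 1)) ≤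
            ∑ k ∈ Finset.range m, ∫ x, v k x ∂μ :=
          Finset.sum_le_sum fun i _ => bound_shift i
        have b1 := boundM (0 + 1); have b0 := boundM 0
        linarith
      calc (m : ℝ) * P u = ∑ k ∈ Finset.range m, P (v k) := hPsum.symm
        _ ≤ 2 * M + ∑ k ∈ Finset.range m, ∫ x, v k x ∂μ := key
        _ = 2 * M + m * ∫ x, u x ∂μ := by rw [hIsum]
    by_contra hcon
    push_neg at hcon
    set δ : ℝ := P u - ∫ x, u x ∂μ with hδ
    have hδ0 : 0 < δ := by simp only [hδ]; linarith
    obtain ⟨m, hm⟩ := exists_nat_gt (2 * M / δ)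
    have hdiv0 : (0 : ℝ) ≤ 2 * M / δ := by positivity
    have hmpos : (0 : ℝ) < m := lt_of_le_of_lt hdiv0 hm
    have h1 := main m
    have h2 : (m : ℝ) * δ ≤ 2 * M := by
      simp only [hδ]
      nlinarith
    have h3 : (m : ℝ) ≤ 2 * M / δ := by
      rw [le_div_iff₀ hδ0]
      linarith
    linarith
  have Ieq01 : ∀ u : C(T, ℝ), (∀ x, 0 ≤ u x) → (∀ x, u x ≤ 1) → ∫ x, u x ∂μ = P u := by
    intro u h0 h1
    have e1 := I2 u h0 h1
    have e2 := I2 (1 - u)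
      (fun x => by
        simp only [ContinuousMap.sub_apply, ContinuousMap.one_apply]
        linarith [h1 x])
      (fun x => by
        simp only [ContinuousMap.sub_apply, ContinuousMap.one_apply]
        linarith [h0 x])
    have e3 : P (1 - u) = M - P u := by rw [_root_.map_sub, hP1]
    have e4 : ∫ x, (1 - u : C(T, ℝ)) x ∂μ = M - ∫ x, u x ∂μ := by
      simp only [ContinuousMap.sub_apply, ContinuousMap.one_apply]
      rw [integral_sub (integrable_const 1) (intg u), integral_const]
      simp [hM, smul_eq_mul, Measure.real]
    rw [e3, e4] at e2
    linarith
  refine ⟨μ, hfin, ?_⟩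
  intro u
  set a : ℝ := ‖u‖ with ha
  have ha0 : 0 ≤ a := norm_nonneg u
  have hai : (2 * a + 1) ≠ 0 := by positivity
  have habs : ∀ x, |u x| ≤ a := fun x => u.norm_coe_le_norm x
  set w : C(T, ℝ) := ⟨fun x => (u x + a) / (2 * a + 1),
    (u.continuous.add continuous_const).div_const _⟩ with hw
  have hw0 : ∀ x, 0 ≤ w x := by
    intro x
    have := abs_le.mp (habs x)
    show (0 : ℝ) ≤ (u x + a) / (2 * a + 1)
    apply div_nonneg (by linarith) (by linarith)
  have hw1 : ∀ x, w x ≤ 1 := by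
    intro x
    have := abs_le.mp (habs x)
    show (u x + a) / (2 * a + 1) ≤ 1
    rw [div_le_one (by linarith)]
    linarith
  have hweq := Ieq01 w hw0 hw1
  have hu : u = (2 * a + 1) • w - a • (1 : C(T, ℝ)) := by
    ext x
    simp only [ContinuousMap.sub_apply, ContinuousMap.smul_apply, smul_eq_mul,
      ContinuousMap.one_apply, hw, ContinuousMap.coe_mk]
    field_simp
    ring
  have hPu : P u = (2 * a + 1) * P w - a * M := by
    rw [hu, _root_.map_sub, _root_.map_smul, _root_.map_smul, smul_eq_mul, smul_eq_mul, hP1]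
  have hIu : ∫ x, u x ∂μ = (2 * a + 1) * ∫ x, w x ∂μ - a * M := by
    calc ∫ x, u x ∂μ = ∫ x, ((2 * a + 1) * w x - a * 1) ∂μ := by
          apply integral_congr_ae
          apply Eventually.of_forall
          intro x
          rw [hu]
          simp [smul_eq_mul]
      _ = (2 * a + 1) * ∫ x, w x ∂μ - a * M := by
          rw [integral_sub ((intg w).const_mul _) ((integrable_const (1 : ℝ)).const_mul _),
            integral_const_mul, integral_const_mul, integral_const]
          simp [hM, smul_eq_mul, Measure.real]
  rw [hPu, hIu, hweq]

noncomputable section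

set_option maxHeartbeats 2000000 in
/-- For a weak* compact `c`-norming set `K ⊆ B_{X*}`: a bounded sequence of
first-Baire-class bidual functionals converging pointwise on `K` to a first-Baire-class
functional converges in the weak* topology of `X**`. -/
theorem weakStar_convergence_detected_on_norming_set
    (X : Type*) [NormedAddCommGroup X] [NormedSpace ℝ X] [CompleteSpace X]
    (K : Set (StrongDual ℝ X)) (hK : K ⊆ Metric.closedBall 0 1)
    (hcomp : IsCompact ((fun f => StrongDual.toWeakDual f) '' K))
    (c : ℝ) (hc : 1 ≤ c)
    (hnorming : ∀ x : X, ‖x‖ ≤ c * ⨆ s : K, |(s : StrongDual ℝ X) x|)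
    (xss : StrongDual ℝ (StrongDual ℝ X)) (xn : ℕ → StrongDual ℝ (StrongDual ℝ X))
    (hB1 : ∃ x : ℕ → X, ∀ f : StrongDual ℝ X,
      Tendsto (fun k => (inclusionInDoubleDual ℝ X (x k)) f) atTop (𝓝 (xss f)))
    (hB1n : ∀ n, ∃ x : ℕ → X, ∀ f : StrongDual ℝ X,
      Tendsto (fun k => (inclusionInDoubleDual ℝ X (x k)) f) atTop (𝓝 (xn n f)))
    (hbdd : ∃ C : ℝ, ∀ n, ‖xn n‖ ≤ C)
    (hptwise : ∀ s ∈ K, Tendsto (fun n => xn n s) atTop (𝓝 (xss s))) :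
    ∀ f : StrongDual ℝ X, Tendsto (fun n => xn n f) atTop (𝓝 (xss f)) := by
  classical
  intro f
  rcases K.eq_empty_or_nonempty with hKe | hKne
  · -- trivial case: `X = 0`.
    have hX : ∀ x : X, x = 0 := by
      intro x
      haveI : IsEmpty ↥K := by rw [hKe]; infer_instance
      have h := hnorming x
      rw [Real.iSup_of_isEmpty, mul_zero] at h
      exact norm_le_zero_iff.mp h
    have hf0 : f = 0 := by
      ext x
      rw [hX x]
      simp
    rw [hf0]
    simp only [map_zero]
    exact tendsto_const_nhds
  -- main case
  set S : Set (WeakDual ℝ X) := (fun f => StrongDual.toWeakDual f) '' K with hS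
  haveI : CompactSpace ↥S := isCompact_iff_compactSpace.mp hcomp
  haveI : Nonempty ↥S := Set.Nonempty.to_subtype (hKne.image _)
  haveI : Nonempty (↥S × Bool) := inferInstance
  -- the compact Hausdorff space on which measures will live
  set sgn : ↥S × Bool → ℝ := fun q => cond q.2 1 (-1) with hsgn
  have hsgn_cont : Continuous sgn := by
    have : Continuous (fun b : Bool => cond b (1 : ℝ) (-1)) := continuous_of_discreteTopology
    exact this.comp continuous_snd
  have hsgn_abs : ∀ q, |sgn q| = 1 := by
    rintro ⟨s, b⟩
    cases b <;> simp [hsgn]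
  set π : ↥S × Bool → StrongDual ℝ X := fun q => StrongDual.toWeakDual.symm q.1.1 with hπ
  have hπK : ∀ q, π q ∈ K := by
    rintro ⟨⟨p, hp⟩, b⟩
    obtain ⟨d, hd, rfl⟩ := hp
    simpa [hπ] using hd
  have hπeval : ∀ (q : ↥S × Bool) (v : X), (q.1.1 : WeakDual ℝ X) v = (π q) v := fun q v => rfl
  set gee : X → C(↥S × Bool, ℝ) := fun v =>
    ⟨fun q => sgn q * (q.1.1 : WeakDual ℝ X) v,
      hsgn_cont.mul ((WeakDual.eval_continuous v).comp (continuous_subtype_val.comp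
        continuous_fst))⟩ with hgee
  have hgee_apply : ∀ (v : X) (q : ↥S × Bool), gee v q = sgn q * (π q) v := fun v q => rfl
  -- the sublinear functional `N = sup`
  set N : C(↥S × Bool, ℝ) → ℝ := fun w => sSup (Set.range w) with hN
  have hNmax : ∀ w : C(↥S × Bool, ℝ), ∃ q, (∀ r, w r ≤ w q) ∧ N w = w q := by
    intro w
    obtain ⟨q, -, hq⟩ := isCompact_univ.exists_isMaxOn Set.univ_nonempty w.continuous.continuousOn
    have hq' : ∀ r, w r ≤ w q := fun r => hq (Set.mem_univ r)
    refine ⟨q, hq', le_antisymm (csSup_le (Set.range_nonempty _) ?_) (le_csSup ⟨w q, ?_⟩ ⟨q, rfl⟩)⟩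
    · rintro y ⟨r, rfl⟩; exact hq' r
    · rintro y ⟨r, rfl⟩; exact hq' r
  have hNle : ∀ (w : C(↥S × Bool, ℝ)) (q), w q ≤ N w := by
    intro w q
    obtain ⟨q', hq', hNq⟩ := hNmax w
    rw [hNq]
    exact hq' q
  have hNadd : ∀ w₁ w₂ : C(↥S × Bool, ℝ), N (w₁ + w₂) ≤ N w₁ + N w₂ := by
    intro w₁ w₂
    obtain ⟨q, hq, hNq⟩ := hNmax (w₁ + w₂)
    rw [hNq]
    exact add_le_add (hNle w₁ q) (hNle w₂ q)
  have hNsmul : ∀ r : ℝ, 0 < r → ∀ w : C(↥S × Bool, ℝ), N (r • w) = r * N w := by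
    intro r hr w
    obtain ⟨q, hq, hNq⟩ := hNmax w
    refine le_antisymm ?_ ?_
    · obtain ⟨q', hq', hNq'⟩ := hNmax (r • w)
      rw [hNq', hNq]
      simp only [ContinuousMap.smul_apply, smul_eq_mul]
      exact mul_le_mul_of_nonneg_left (hq q') hr.le
    · rw [hNq]
      calc r * w q = (r • w) q := by simp [smul_eq_mul]
        _ ≤ N (r • w) := hNle _ _
  have hNconst : ∀ (w : C(↥S × Bool, ℝ)) (t : ℝ), N (w + t • 1) = N w + t := by
    intro w t
    obtain ⟨q, hq, hNq⟩ := hNmax w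
    obtain ⟨q', hq', hNq'⟩ := hNmax (w + t • 1)
    have h1 : N (w + t • 1) = w q' + t := by
      rw [hNq']; simp [smul_eq_mul]
    have h2 : w q' ≤ w q := hq q'
    have h3 : w q + t ≤ N (w + t • 1) := by
      calc w q + t = (w + t • 1) q := by simp [smul_eq_mul]
        _ ≤ N (w + t • 1) := hNle _ _
    rw [hNq]
    linarith
  -- the normalization constant
  set γ : ℝ := c * (‖f‖ + 1) with hγ
  have hγ0 : 0 < γ := by positivity
  -- the (partial) linear functional to be extended
  set Φ : (X × ℝ) →ₗ[ℝ] C(↥S × Bool, ℝ) :=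
    { toFun := fun y => gee y.1 + y.2 • 1
      map_add' := by
        intro y z
        ext q
        simp only [hgee, ContinuousMap.add_apply, ContinuousMap.smul_apply,
          ContinuousMap.one_apply, ContinuousMap.coe_mk, smul_eq_mul, Prod.fst_add, Prod.snd_add,
          map_add]
        ring
      map_smul' := by
        intro r y
        ext q
        simp only [hgee, ContinuousMap.add_apply, ContinuousMap.smul_apply,
          ContinuousMap.one_apply, ContinuousMap.coe_mk, smul_eq_mul, Prod.smul_fst,
          Prod.smul_snd, map_smul, RingHom.id_apply]
        ring } with hΦ
  set ψ : (X × ℝ) →ₗ[ℝ] ℝ :=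
    { toFun := fun y => f y.1 / γ + y.2
      map_add' := by
        intro y z
        simp only [Prod.fst_add, Prod.snd_add, map_add]
        ring
      map_smul' := by
        intro r y
        simp only [Prod.smul_fst, Prod.smul_snd, map_smul, smul_eq_mul, RingHom.id_apply]
        ring } with hψ
  have hiSup_nonneg : ∀ x : X, 0 ≤ ⨆ s : K, |(s : StrongDual ℝ X) x| := by
    intro x
    exact Real.iSup_nonneg fun s => abs_nonneg _
  have hsup_le_N : ∀ x : X, (⨆ s : K, |(s : StrongDual ℝ X) x|) ≤ N (gee x) := by
    intro x
    haveI : Nonempty ↥K := hKne.to_subtype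
    apply ciSup_le
    intro s
    have hmem : StrongDual.toWeakDual (s : StrongDual ℝ X) ∈ S := ⟨s, s.2, rfl⟩
    have h1 : (s : StrongDual ℝ X) x ≤ N (gee x) := by
      have := hNle (gee x) ⟨⟨_, hmem⟩, true⟩
      simpa [hgee, hsgn] using this
    have h2 : -((s : StrongDual ℝ X) x) ≤ N (gee x) := by
      have := hNle (gee x) ⟨⟨_, hmem⟩, false⟩
      simpa [hgee, hsgn] using this
    exact abs_le.mpr ⟨by linarith, h1⟩
  have hker : LinearMap.ker Φ ≤ LinearMap.ker ψ := by
    rintro ⟨x, t⟩ hxt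
    have hval : ∀ q : ↥S × Bool, sgn q * (q.1.1 : WeakDual ℝ X) x + t = 0 := by
      intro q
      have h0 : Φ (x, t) = 0 := LinearMap.mem_ker.mp hxt
      have : (gee x + t • 1) q = 0 := by
        rw [show gee x + t • 1 = Φ (x, t) from rfl, h0]
        rfl
      simpa [hgee, smul_eq_mul] using this
    obtain ⟨p₀, hp₀⟩ : S.Nonempty := hKne.image _
    have htrue := hval ⟨⟨p₀, hp₀⟩, true⟩
    have hfalse := hval ⟨⟨p₀, hp₀⟩, false⟩
    simp only [hsgn, cond_true, cond_false, one_mul, neg_one_mul] at htrue hfalse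
    have ht : t = 0 := by nlinarith [htrue, hfalse]
    have hx : x = 0 := by
      have hz : ∀ s : K, ((s : StrongDual ℝ X)) x = 0 := by
        intro s
        have hmem : StrongDual.toWeakDual (s : StrongDual ℝ X) ∈ S := ⟨s, s.2, rfl⟩
        have := hval ⟨⟨_, hmem⟩, true⟩
        simp only [hsgn, ht, add_zero] at this
        simpa using this
      have : (⨆ s : K, |(s : StrongDual ℝ X) x|) = 0 := by
        haveI : Nonempty ↥K := hKne.to_subtype
        have : (fun s : K => |(s : StrongDual ℝ X) x|) = fun _ => (0 : ℝ) := by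
          funext s
          rw [hz s, abs_zero]
        rw [this, ciSup_const]
      have hn := hnorming x
      rw [this, mul_zero] at hn
      exact norm_le_zero_iff.mp hn
    subst hx; subst ht
    rw [LinearMap.mem_ker, show ((0 : X), (0 : ℝ)) = (0 : X × ℝ) from rfl, map_zero]
  -- build the partial linear map and extend via Hahn–Banach
  set pφ : C(↥S × Bool, ℝ) →ₗ.[ℝ] ℝ :=
    ⟨LinearMap.range Φ,
      ((LinearMap.ker Φ).liftQ ψ hker).comp (LinearMap.quotKerEquivRange Φ).symm.toLinearMap⟩
    with hpφ
  have hpφ_apply : ∀ y : X × ℝ, ∀ h : Φ y ∈ LinearMap.range Φ, pφ ⟨Φ y, h⟩ = ψ y := by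
    intro y h
    show ((LinearMap.ker Φ).liftQ ψ hker) ((LinearMap.quotKerEquivRange Φ).symm ⟨Φ y, h⟩) = ψ y
    rw [LinearMap.quotKerEquivRange_symm_apply_image Φ y h]
    rfl
  have hpφ_le : ∀ y : pφ.domain, pφ y ≤ N y := by
    rintro ⟨w, hw⟩
    obtain ⟨y, rfl⟩ := hw
    rw [hpφ_apply y ⟨y, rfl⟩]
    have hstep : f y.1 ≤ γ * N (gee y.1) := by
      have h1 : f y.1 ≤ ‖f‖ * ‖y.1‖ := by
        calc f y.1 ≤ |f y.1| := le_abs_self _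
          _ ≤ ‖f‖ * ‖y.1‖ := f.le_opNorm y.1
      have h2 : ‖y.1‖ ≤ c * ⨆ s : K, |(s : StrongDual ℝ X) y.1| := hnorming y.1
      have h3 := hsup_le_N y.1
      have h4 := hiSup_nonneg y.1
      have h5 : ‖f‖ * (c * ⨆ s : K, |(s : StrongDual ℝ X) y.1|) ≤ γ * N (gee y.1) := by
        rw [hγ]
        have hc0 : (0 : ℝ) < c := lt_of_lt_of_le one_pos hc
        nlinarith [norm_nonneg f]
      calc f y.1 ≤ ‖f‖ * ‖y.1‖ := h1
        _ ≤ ‖f‖ * (c * ⨆ s : K, |(s : StrongDual ℝ X) y.1|) :=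
            mul_le_mul_of_nonneg_left h2 (norm_nonneg f)
        _ ≤ γ * N (gee y.1) := h5
    have : ψ y = f y.1 / γ + y.2 := rfl
    rw [this]
    have hNy : N (Φ y) = N (gee y.1) + y.2 := hNconst _ _
    have : f y.1 / γ ≤ N (gee y.1) := by
      rw [div_le_iff₀ hγ0]
      calc f y.1 ≤ γ * N (gee y.1) := hstep
        _ = N (gee y.1) * γ := by ring
    simp only [hNy]
    linarith
  obtain ⟨P, hPagree, hPle⟩ := exists_extension_of_le_sublinear pφ N hNsmul hNadd hpφ_le
  have hPrep : ∀ y : X × ℝ, P (Φ y) = ψ y := by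
    intro y
    have := hPagree ⟨Φ y, ⟨y, rfl⟩⟩
    rw [hpφ_apply y ⟨y, rfl⟩] at this
    exact this
  have hPpos : ∀ u : C(↥S × Bool, ℝ), (∀ q, 0 ≤ u q) → 0 ≤ P u := by
    intro u hu
    have h1 : P (-u) ≤ N (-u) := hPle (-u)
    have h2 : N (-u) ≤ 0 := by
      obtain ⟨q, hq, hNq⟩ := hNmax (-u)
      rw [hNq]
      simp only [ContinuousMap.neg_apply, neg_nonpos]
      exact hu q
    have h3 : P (-u) = -P u := map_neg P u
    linarith
  have hgee_lin : ∀ v : X, gee v = Φ (v, 0) := by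
    intro v
    ext q
    simp [hΦ, hgee]
  have hrep : ∀ v : X, P (gee v) = f v / γ := by
    intro v
    rw [hgee_lin v, hPrep (v, 0)]
    simp [hψ]
  -- get the representing measure
  borelize (↥S × Bool)
  obtain ⟨μ, hfin, hint⟩ := riesz_rep P hPpos
  have hintrep : ∀ v : X, ∫ q, gee v q ∂μ = f v / γ := fun v => (hint (gee v)).trans (hrep v)
  -- the bridge: a Baire-one functional's value at `f` is `γ` times the integral of its
  -- pointwise extension to `S × Bool`.
  have bridge : ∀ (z : StrongDual ℝ (StrongDual ℝ X)) (w : ℕ → X),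
      (∀ g : StrongDual ℝ X, Tendsto (fun k => (inclusionInDoubleDual ℝ X (w k)) g) atTop (𝓝 (z g))) →
      MeasureTheory.AEStronglyMeasurable (fun q => sgn q * z (π q)) μ ∧
        z f = γ * ∫ q, sgn q * z (π q) ∂μ := by
    intro z w hw
    have hb : ∀ g : StrongDual ℝ X, ∃ C, ∀ k, ‖(inclusionInDoubleDual ℝ X (w k)) g‖ ≤ C := by
      intro g
      obtain ⟨C, hC⟩ := (Metric.isBounded_range_of_tendsto _ (hw g)).exists_norm_le
      exact ⟨C, fun k => hC _ (Set.mem_range_self k)⟩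
    obtain ⟨C', hC'⟩ := banach_steinhaus hb
    have hC'0 : 0 ≤ C' := le_trans (norm_nonneg _) (hC' 0)
    have hpt : ∀ q : ↥S × Bool, Tendsto (fun k => gee (w k) q) atTop (𝓝 (sgn q * z (π q))) := by
      intro q
      have h1 : Tendsto (fun k => (inclusionInDoubleDual ℝ X (w k)) (π q)) atTop
          (𝓝 (z (π q))) := hw (π q)
      have h2 : ∀ k, gee (w k) q = sgn q * (inclusionInDoubleDual ℝ X (w k)) (π q) := by
        intro k
        rw [hgee_apply, NormedSpace.dual_def]
      simp only [h2]
      exact h1.const_mul _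
    have hmeasF : MeasureTheory.AEStronglyMeasurable (fun q => sgn q * z (π q)) μ := by
      have : Measurable (fun q : ↥S × Bool => sgn q * z (π q)) := by
        apply measurable_of_tendsto_metrizable (fun k => (gee (w k)).continuous.measurable)
        rw [tendsto_pi_nhds]
        exact hpt
      exact this.aestronglyMeasurable
    have hbound : ∀ k, ∀ᵐ q ∂μ, ‖gee (w k) q‖ ≤ C' := by
      intro k
      apply Filter.Eventually.of_forall
      intro q
      have h0 : gee (w k) q = sgn q * (π q) (w k) := hgee_apply _ _
      have h1 : ‖(π q) (w k)‖ = ‖(inclusionInDoubleDual ℝ X (w k)) (π q)‖ := by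
        rw [NormedSpace.dual_def]
      have h2 : ‖(inclusionInDoubleDual ℝ X (w k)) (π q)‖ ≤
          ‖inclusionInDoubleDual ℝ X (w k)‖ * ‖π q‖ :=
        (inclusionInDoubleDual ℝ X (w k)).le_opNorm _
      have h3 : ‖π q‖ ≤ 1 := by
        have := hK (hπK q)
        simpa [Metric.mem_closedBall] using this
      have h4 : ‖inclusionInDoubleDual ℝ X (w k)‖ * ‖π q‖ ≤ C' * 1 :=
        mul_le_mul (hC' k) h3 (norm_nonneg _) hC'0
      rw [h0, norm_mul, Real.norm_eq_abs, Real.norm_eq_abs, hsgn_abs, one_mul,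
        ← Real.norm_eq_abs]
      calc ‖(π q) (w k)‖ = ‖(inclusionInDoubleDual ℝ X (w k)) (π q)‖ := h1
        _ ≤ ‖inclusionInDoubleDual ℝ X (w k)‖ * ‖π q‖ := h2
        _ ≤ C' * 1 := h4
        _ = C' := mul_one C'
    have hdct := MeasureTheory.tendsto_integral_of_dominated_convergence (fun _ => C')
      (fun k => (gee (w k)).continuous.aestronglyMeasurable)
      (MeasureTheory.integrable_const C') hbound (Filter.Eventually.of_forall hpt)
    have hL : ∀ k, ∫ q, gee (w k) q ∂μ = f (w k) / γ := fun k => hintrep (w k)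
    have hR : Tendsto (fun k => f (w k) / γ) atTop (𝓝 (z f / γ)) := by
      have h1 := hw f
      have h2 : ∀ k, (inclusionInDoubleDual ℝ X (w k)) f = f (w k) := fun k =>
        NormedSpace.dual_def _ _ _ _
      simp only [h2] at h1
      exact h1.div_const γ
    have huniq : z f / γ = ∫ q, sgn q * z (π q) ∂μ := by
      apply tendsto_nhds_unique _ hdct
      simp only [hL]
      exact hR
    refine ⟨hmeasF, ?_⟩
    rw [← huniq]
    field_simp
  -- apply the bridge to `xss` and to each `xn n`
  obtain ⟨x0, hx0⟩ := hB1
  obtain ⟨hFmeas, hFeq⟩ := bridge xss x0 hx0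
  choose wn hwn using hB1n
  have bn := fun n => bridge (xn n) (wn n) (hwn n)
  obtain ⟨C, hC⟩ := hbdd
  have hC0 : 0 ≤ C := le_trans (norm_nonneg (xn 0)) (hC 0)
  have hfinal := MeasureTheory.tendsto_integral_of_dominated_convergence
    (F := fun n q => sgn q * xn n (π q)) (f := fun q => sgn q * xss (π q)) (fun _ => C)
    (fun n => (bn n).1) (MeasureTheory.integrable_const C)
    (by
      intro n
      apply Filter.Eventually.of_forall
      intro q
      have h3 : ‖π q‖ ≤ 1 := by
        have := hK (hπK q)
        simpa [Metric.mem_closedBall] using this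
      have h1 : ‖xn n (π q)‖ ≤ ‖xn n‖ * ‖π q‖ := (xn n).le_opNorm _
      have h2 : ‖xn n‖ * ‖π q‖ ≤ C * 1 := mul_le_mul (hC n) h3 (norm_nonneg _) hC0
      rw [norm_mul, Real.norm_eq_abs, Real.norm_eq_abs, hsgn_abs, one_mul, ← Real.norm_eq_abs]
      calc ‖xn n (π q)‖ ≤ ‖xn n‖ * ‖π q‖ := h1
        _ ≤ C * 1 := h2
        _ = C := mul_one C)
    (by
      apply Filter.Eventually.of_forall
      intro q
      exact (hptwise (π q) (hπK q)).const_mul _)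
  have hxnf : ∀ n, xn n f = γ * ∫ q, sgn q * xn n (π q) ∂μ := fun n => (bn n).2
  rw [show (fun n => xn n f) = fun n => γ * ∫ q, sgn q * xn n (π q) ∂μ from funext hxnf, hFeq]
  exact hfinal.const_mul γ

end
end
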